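/- arXiv:0906.4506 — 8 statements merged into one kernel-verified Lean document; each statement's English description precedes it below -/
import Mathlib

section
/- Let μ be a positive measure on ℝ with moments of all orders and infinite support, with orthonormal polynomials (P_n). Let λ_N be the smallest eigenvalue of the Hankel matrix H_N = (s_{n+m})_{0≤n,m≤N}. Then for every z₀ ∈ ℂ with |z₀| < 1, λ_N ≤ ((1 − |z₀|²) Σ_{n=0}^N |P_n(z₀)|²)^{-1}. -/
open MeasureTheory Polynomial Finset

/-!
The Christoffel kernel `K(x) = ∑_{k ≤ N} conj(P_k(z₀)) P_k(x)` satisfies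
`∫ |K|² dμ = K(z₀) = ∑_{k ≤ N} |P_k(z₀)|² =: S` by orthonormality. Writing `K(x) = ∑ cᵢ xⁱ`, the
Rayleigh quotient gives `λ_N ∑ |cᵢ|² ≤ ∫ |K|² dμ = S`, while Cauchy–Schwarz against `(z₀ⁱ)` gives
`S² = |∑ cᵢ z₀ⁱ|² ≤ ∑ |cᵢ|² / (1 - |z₀|²)`. Hence `λ_N S² (1 - |z₀|²) ≤ S`. As `H_N` is real, the
Rayleigh bound is applied to the real and imaginary parts of `K` separately.
-/

theorem norm_sum_mul_pow_sq_mul_le (c : ℕ → ℂ) (z : ℂ) (hz : ‖z‖ ≤ 1) (n : ℕ) :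
    ‖∑ i ∈ range n, c i * z ^ i‖ ^ 2 * (1 - ‖z‖ ^ 2) ≤ ∑ i ∈ range n, ‖c i‖ ^ 2 := by
  have h1t : 0 ≤ 1 - ‖z‖ ^ 2 := by nlinarith [norm_nonneg z]
  have hgeom : (∑ i ∈ range n, (‖z‖ ^ i) ^ 2) * (1 - ‖z‖ ^ 2) ≤ 1 := by
    simp_rw [← pow_mul, mul_comm _ 2, pow_mul]
    have := geom_sum_mul (‖z‖ ^ 2) n
    nlinarith [pow_nonneg (sq_nonneg ‖z‖) n]
  have hCS : ‖∑ i ∈ range n, c i * z ^ i‖ ^ 2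
      ≤ (∑ i ∈ range n, ‖c i‖ ^ 2) * ∑ i ∈ range n, (‖z‖ ^ i) ^ 2 := by
    refine le_trans ?_ (sum_mul_sq_le_sq_mul_sq _ _ _)
    gcongr
    refine (norm_sum_le _ _).trans_eq ?_
    simp only [norm_mul, norm_pow]
  calc ‖∑ i ∈ range n, c i * z ^ i‖ ^ 2 * (1 - ‖z‖ ^ 2)
      ≤ (∑ i ∈ range n, ‖c i‖ ^ 2) * ((∑ i ∈ range n, (‖z‖ ^ i) ^ 2) * (1 - ‖z‖ ^ 2)) := by
        rw [← mul_assoc]; gcongr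
    _ ≤ ∑ i ∈ range n, ‖c i‖ ^ 2 := mul_le_of_le_one_right (by positivity) hgeom

theorem IsLeast.mul_sum_sq_le {ι : Type*} [Fintype ι] {A : ι → ι → ℝ} {lam : ℝ}
    (hlam : IsLeast {r | ∃ a : ι → ℝ, ∑ i, a i ^ 2 = 1 ∧ r = ∑ i, ∑ j, A i j * a i * a j} lam)
    (w : ι → ℝ) : lam * ∑ i, w i ^ 2 ≤ ∑ i, ∑ j, A i j * w i * w j := by
  obtain hw | hw := (sum_nonneg fun i _ => sq_nonneg (w i)).eq_or_lt
  · have hw0 : ∀ i, w i = 0 := fun i => by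
      simpa using (sum_eq_zero_iff_of_nonneg fun i _ => sq_nonneg (w i)).1 hw.symm i (mem_univ i)
    simp [hw0]
  set c := √(∑ i, w i ^ 2)
  have hc : c ^ 2 = ∑ i, w i ^ 2 := Real.sq_sqrt hw.le
  have hcpos : 0 < c := Real.sqrt_pos.2 hw
  have hle := hlam.2 ⟨fun i => w i / c, by simp only [div_pow, ← sum_div, hc, div_self hw.ne'], rfl⟩
  have hscale : ∑ i, ∑ j, A i j * (w i / c) * (w j / c)
      = (∑ i, ∑ j, A i j * w i * w j) / c ^ 2 := by
    simp only [sum_div]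
    exact sum_congr rfl fun i _ => sum_congr rfl fun j _ => by ring
  rw [hscale, le_div_iff₀ (by positivity), hc] at hle
  exact hle

section Moments

variable {μ : Measure ℝ}

theorem integrable_eval_of_moments
    (hmom : ∀ n : ℕ, Integrable (fun x => x ^ n) μ) (p : ℝ[X]) :
    Integrable (fun x => p.eval x) μ := by
  simp_rw [eval_eq_sum_range]
  exact integrable_finsetSum _ fun i _ => (hmom i).const_mul _

theorem integral_eval_sq_eq_sum_moments
    (hmom : ∀ n : ℕ, Integrable (fun x => x ^ n) μ) {p : ℝ[X]} {N : ℕ} (hp : p.natDegree ≤ N) :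
    ∫ x, p.eval x ^ 2 ∂μ
      = ∑ i : Fin (N + 1), ∑ j : Fin (N + 1),
          (∫ x, x ^ ((i : ℕ) + j) ∂μ) * p.coeff i * p.coeff j := by
  have hexp : ∀ x, p.eval x ^ 2 = ∑ i : Fin (N + 1), ∑ j : Fin (N + 1),
      p.coeff i * p.coeff j * x ^ ((i : ℕ) + j) := fun x => by
    rw [eval_eq_sum_range' (Nat.lt_succ_of_le hp), ← Fin.sum_univ_eq_sum_range, sq, sum_mul_sum]
    exact sum_congr rfl fun i _ => sum_congr rfl fun j _ => by ring
  simp_rw [hexp]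
  rw [integral_finsetSum _ fun i _ => integrable_finsetSum _ fun j _ => (hmom _).const_mul _]
  refine sum_congr rfl fun i _ => ?_
  rw [integral_finsetSum _ fun j _ => (hmom _).const_mul _]
  exact sum_congr rfl fun j _ => by rw [integral_const_mul]; ring

theorem integral_eval_sq_sum_orthonormal
    (hmom : ∀ n : ℕ, Integrable (fun x => x ^ n) μ) {P : ℕ → ℝ[X]}
    (horth : ∀ n m, ∫ x, (P n).eval x * (P m).eval x ∂μ = if n = m then 1 else 0)
    (c : ℕ → ℝ) (t : Finset ℕ) :
    ∫ x, (∑ k ∈ t, C (c k) * P k).eval x ^ 2 ∂μ = ∑ k ∈ t, c k ^ 2 := by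
  have hint : ∀ k l, Integrable (fun x => c k * c l * ((P k).eval x * (P l).eval x)) μ :=
    fun k l => by simpa using (integrable_eval_of_moments hmom (P k * P l)).const_mul (c k * c l)
  have hexp : ∀ x, (∑ k ∈ t, C (c k) * P k).eval x ^ 2
      = ∑ k ∈ t, ∑ l ∈ t, c k * c l * ((P k).eval x * (P l).eval x) := fun x => by
    simp only [eval_finsetSum, eval_mul, eval_C, sq, sum_mul_sum]
    exact sum_congr rfl fun k _ => sum_congr rfl fun l _ => by ring
  simp_rw [hexp]
  rw [integral_finsetSum _ fun k _ => integrable_finsetSum _ fun l _ => hint k l]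
  refine sum_congr rfl fun k hk => ?_
  simp_rw [integral_finsetSum _ fun l _ => hint k l, integral_const_mul, horth]
  simp [hk, sq]

theorem IsLeast.mul_sum_coeff_sq_le_integral_eval_sq
    (hmom : ∀ n : ℕ, Integrable (fun x => x ^ n) μ) {s : ℕ → ℝ}
    (hs : ∀ n, s n = ∫ x, x ^ n ∂μ) {N : ℕ} {lam : ℝ}
    (hlam : IsLeast {r : ℝ | ∃ a : Fin (N + 1) → ℝ, (∑ i : Fin (N + 1), (a i) ^ 2) = 1 ∧
        r = ∑ i : Fin (N + 1), ∑ j : Fin (N + 1), s ((i : ℕ) + (j : ℕ)) * a i * a j} lam)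
    {p : ℝ[X]} (hp : p.natDegree ≤ N) :
    lam * ∑ i : Fin (N + 1), p.coeff i ^ 2 ≤ ∫ x, p.eval x ^ 2 ∂μ := by
  rw [integral_eval_sq_eq_sum_moments hmom hp]
  simp_rw [← hs]
  exact hlam.mul_sum_sq_le _

end Moments

theorem natDegree_sum_C_mul_le {P : ℕ → ℝ[X]} (hdeg : ∀ n, (P n).natDegree ≤ n) (c : ℕ → ℝ)
    (N : ℕ) : (∑ k ∈ range (N + 1), C (c k) * P k).natDegree ≤ N :=
  natDegree_sum_le_of_forall_le _ _ fun k hk =>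
    (natDegree_C_mul_le _ _).trans ((hdeg k).trans (Nat.lt_succ_iff.1 (mem_range.1 hk)))

theorem aeval_sum_re_sub_I_mul_aeval_sum_im (P : ℕ → ℝ[X]) (z : ℂ) (t : Finset ℕ) :
    aeval z (∑ k ∈ t, C (aeval z (P k)).re * P k)
      - Complex.I * aeval z (∑ k ∈ t, C (aeval z (P k)).im * P k)
      = ((∑ k ∈ t, ‖aeval z (P k)‖ ^ 2 : ℝ) : ℂ) := by
  simp only [map_sum, map_mul, aeval_C, Complex.ofReal_sum, Finset.mul_sum, ← sum_sub_distrib]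
  refine sum_congr rfl fun k _ => ?_
  apply Complex.ext <;> simp [Complex.sq_norm, Complex.normSq_apply]; ring

theorem norm_aeval_sub_I_mul_aeval_sq_mul_le {p q : ℝ[X]} {N : ℕ} (hp : p.natDegree ≤ N)
    (hq : q.natDegree ≤ N) {z : ℂ} (hz : ‖z‖ ≤ 1) :
    ‖aeval z p - Complex.I * aeval z q‖ ^ 2 * (1 - ‖z‖ ^ 2)
      ≤ ∑ i : Fin (N + 1), p.coeff i ^ 2 + ∑ i : Fin (N + 1), q.coeff i ^ 2 := by
  have hsum : aeval z p - Complex.I * aeval z q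
      = ∑ i ∈ range (N + 1), ((p.coeff i : ℂ) - Complex.I * q.coeff i) * z ^ i := by
    rw [aeval_eq_sum_range' (Nat.lt_succ_of_le hp), aeval_eq_sum_range' (Nat.lt_succ_of_le hq),
      Finset.mul_sum, ← sum_sub_distrib]
    exact sum_congr rfl fun i _ => by simp only [Complex.real_smul]; ring
  have hcoeff : ∀ i,
      ‖(p.coeff i : ℂ) - Complex.I * q.coeff i‖ ^ 2 = p.coeff i ^ 2 + q.coeff i ^ 2 :=
    fun i => by simp [Complex.sq_norm, Complex.normSq_apply]; ring
  rw [hsum]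
  refine (norm_sum_mul_pow_sq_mul_le _ z hz _).trans_eq ?_
  simp only [hcoeff, sum_add_distrib, Fin.sum_univ_eq_sum_range (fun i => p.coeff i ^ 2),
    Fin.sum_univ_eq_sum_range (fun i => q.coeff i ^ 2)]

theorem smallest_eigenvalue_upper_bound_general
    (μ : Measure ℝ)
    (hmom : ∀ n : ℕ, Integrable (fun x => x ^ n) μ)
    (s : ℕ → ℝ) (hs : ∀ n, s n = ∫ x, x ^ n ∂μ)
    (P : ℕ → Polynomial ℝ)
    (hdeg : ∀ n, (P n).natDegree = n)
    (horth : ∀ n m, ∫ x, (P n).eval x * (P m).eval x ∂μ = if n = m then 1 else 0)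
    (N : ℕ) (lam : ℝ)
    (hlam : IsLeast {r : ℝ | ∃ a : Fin (N + 1) → ℝ, (∑ i : Fin (N + 1), (a i) ^ 2) = 1 ∧
        r = ∑ i : Fin (N + 1), ∑ j : Fin (N + 1), s ((i : ℕ) + (j : ℕ)) * a i * a j} lam)
    (z₀ : ℂ) (hz₀ : ‖z₀‖ < 1) :
    lam ≤ ((1 - ‖z₀‖ ^ 2) *
        ∑ n ∈ Finset.range (N + 1), ‖Polynomial.aeval z₀ (P n)‖ ^ 2)⁻¹ := by
  set S := ∑ n ∈ range (N + 1), ‖aeval z₀ (P n)‖ ^ 2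
  set Rp := ∑ k ∈ range (N + 1), C (aeval z₀ (P k)).re * P k
  set Ip := ∑ k ∈ range (N + 1), C (aeval z₀ (P k)).im * P k
  have hRp := natDegree_sum_C_mul_le (fun n => (hdeg n).le) (fun k => (aeval z₀ (P k)).re) N
  have hIp := natDegree_sum_C_mul_le (fun n => (hdeg n).le) (fun k => (aeval z₀ (P k)).im) N
  set W := ∑ i : Fin (N + 1), Rp.coeff i ^ 2 + ∑ i : Fin (N + 1), Ip.coeff i ^ 2
  have hlamW : lam * W ≤ S := by
    have hR := hlam.mul_sum_coeff_sq_le_integral_eval_sq hmom hs hRp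
    have hI := hlam.mul_sum_coeff_sq_le_integral_eval_sq hmom hs hIp
    rw [integral_eval_sq_sum_orthonormal hmom horth] at hR hI
    simp only [S, W, Complex.sq_norm, Complex.normSq_apply, ← sq, sum_add_distrib]
    linarith
  have hS : 0 < S := by
    have hP0 : P 0 ≠ 0 := fun h => by simpa [h] using horth 0 0
    have hw0 : aeval z₀ (P 0) ≠ 0 := by
      rw [eq_C_of_natDegree_eq_zero (hdeg 0)] at hP0 ⊢
      simpa using hP0
    exact sum_pos' (fun _ _ => by positivity) ⟨0, by simp, pow_pos (norm_pos_iff.2 hw0) 2⟩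
  have hSW : S ^ 2 * (1 - ‖z₀‖ ^ 2) ≤ W := by
    have := norm_aeval_sub_I_mul_aeval_sq_mul_le hRp hIp hz₀.le
    rwa [aeval_sum_re_sub_I_mul_aeval_sum_im, Complex.norm_real, Real.norm_eq_abs, sq_abs] at this
  have ht : 0 < 1 - ‖z₀‖ ^ 2 := by nlinarith [norm_nonneg z₀]
  rcases le_or_gt lam 0 with hlam0 | hlam0
  · exact hlam0.trans (by positivity)
  rw [← one_div, le_div_iff₀ (by positivity)]
  refine le_of_mul_le_mul_right ?_ hS
  nlinarith [mul_le_mul_of_nonneg_left hSW hlam0.le]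

/-- Upper bound for the smallest eigenvalue of the Hankel matrix of moments:
`λ_N ≤ ((1 - |z₀|²) ∑_{n=0}^N |P_n(z₀)|²)⁻¹` for `|z₀| < 1`. -/
theorem smallest_eigenvalue_upper_bound
    (μ : Measure ℝ)
    (hmom : ∀ n : ℕ, Integrable (fun x => x ^ n) μ)
    (hsupp : ∀ p : Polynomial ℝ, p ≠ 0 → 0 < ∫ x, (p.eval x) ^ 2 ∂μ)
    (s : ℕ → ℝ) (hs : ∀ n, s n = ∫ x, x ^ n ∂μ)
    (P : ℕ → Polynomial ℝ)
    (hdeg : ∀ n, (P n).natDegree = n)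
    (hlead : ∀ n, 0 < (P n).leadingCoeff)
    (horth : ∀ n m, ∫ x, (P n).eval x * (P m).eval x ∂μ = if n = m then 1 else 0)
    (N : ℕ) (lam : ℝ)
    (hlam : IsLeast {r : ℝ | ∃ a : Fin (N + 1) → ℝ, (∑ i : Fin (N + 1), (a i) ^ 2) = 1 ∧
        r = ∑ i : Fin (N + 1), ∑ j : Fin (N + 1), s ((i : ℕ) + (j : ℕ)) * a i * a j} lam)
    (z₀ : ℂ) (hz₀ : ‖z₀‖ < 1) :
    lam ≤ ((1 - ‖z₀‖ ^ 2) *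
        ∑ n ∈ Finset.range (N + 1), ‖Polynomial.aeval z₀ (P n)‖ ^ 2)⁻¹ :=
  smallest_eigenvalue_upper_bound_general μ hmom s hs P hdeg horth N lam hlam z₀ hz₀
end

section
/- Let (P_n) be orthonormal polynomials satisfying x P_n(x) = b_n P_{n+1}(x) + b_{n−1} P_{n−1}(x) with b₀ = 1 and b_n > 0, and set u_n = |P_n(i)|. Then for every z ∈ ℂ with |z| ≤ 1 and every n ≥ 0, |P_n(z)| ≤ u_n. -/
/-!
Evaluated at a point `z`, the recurrence `b (n+1) P_{n+2} = z P_{n+1} - b n P_n` bounds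
`b (n+1) |P_{n+2}(z)|` by `|z| |P_{n+1}(z)| + b n |P_n(z)|`. At `z = i` this is an equality:
`P_n(i) = i^n P_0 u_n` for a real sequence `u_n` (`majorant` below), because the factor `i^n`
turns the minus sign of the recurrence into a plus. Hence for `|z| ≤ 1`, by induction on `n`,
`|P_n(z)| ≤ |P_0| u_n ≤ |P_0 u_n| = |P_n(i)|`.
-/

open MeasureTheory Polynomial

/-- The first conjunct is the case `n = 0` of the recurrence, read with `p_{-1} = 0`. -/
def ThreeTermRec (b : ℕ → ℝ) (z : ℂ) (p : ℕ → ℂ) : Prop :=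
  z * p 0 = b 0 * p 1 ∧ ∀ n, z * p (n + 1) = b (n + 1) * p (n + 2) + b n * p n

/-- `majorant b n = |P_n(i)| / |P_0|`. -/
noncomputable def majorant (b : ℕ → ℝ) : ℕ → ℝ
  | 0 => 1
  | 1 => (b 0)⁻¹
  | n + 2 => (majorant b (n + 1) + b n * majorant b n) / b (n + 1)

section Recurrence

variable {b : ℕ → ℝ} {v : ℕ → ℝ}

@[simp]
theorem majorant_zero : majorant b 0 = 1 := rfl

theorem majorant_zero_eq_mul_majorant_one (hb : b 0 ≠ 0) :
    majorant b 0 = b 0 * majorant b 1 := by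
  simp [majorant, hb]

theorem majorant_succ_succ {n : ℕ} (hb : b (n + 1) ≠ 0) :
    majorant b (n + 1) + b n * majorant b n = b (n + 1) * majorant b (n + 2) := by
  rw [majorant, mul_div_cancel₀ _ hb]

theorem norm_le_of_threeTermRec {z : ℂ} {p : ℕ → ℂ} (hb : ∀ n, 0 < b n) (hz : ‖z‖ ≤ 1)
    (hp : ThreeTermRec b z p) (hv₀ : v 0 = b 0 * v 1)
    (hv : ∀ n, v (n + 1) + b n * v n = b (n + 1) * v (n + 2)) (h₀ : ‖p 0‖ ≤ v 0) :
    ∀ n, ‖p n‖ ≤ v n := by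
  have hbnorm (n : ℕ) : ‖(b n : ℂ)‖ = b n := by simp [(hb n).le]
  refine Nat.twoStepInduction h₀ ?_ fun n ih₀ ih₁ => ?_
  · refine le_of_mul_le_mul_left ?_ (hb 0)
    calc b 0 * ‖p 1‖ = ‖z‖ * ‖p 0‖ := by rw [← hbnorm, ← norm_mul, ← norm_mul, hp.1]
      _ ≤ 1 * v 0 := by gcongr
      _ = b 0 * v 1 := by rw [one_mul, hv₀]
  · refine le_of_mul_le_mul_left ?_ (hb (n + 1))
    calc b (n + 1) * ‖p (n + 2)‖ = ‖z * p (n + 1) - b n * p n‖ := by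
          rw [← hbnorm, ← norm_mul, hp.2 n, add_sub_cancel_right]
      _ ≤ ‖z‖ * ‖p (n + 1)‖ + b n * ‖p n‖ := by
          grw [norm_sub_le, norm_mul, norm_mul, hbnorm]
      _ ≤ 1 * v (n + 1) + b n * v n := by gcongr; exact (hb n).le
      _ = b (n + 1) * v (n + 2) := by rw [one_mul, hv]

theorem eq_I_pow_mul_of_threeTermRec {q : ℕ → ℂ} (hb : ∀ n, 0 < b n)
    (hq : ThreeTermRec b Complex.I q) (hv₀ : v 0 = b 0 * v 1)
    (hv : ∀ n, v (n + 1) + b n * v n = b (n + 1) * v (n + 2)) (h₀ : q 0 = v 0) :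
    ∀ n, q n = Complex.I ^ n * v n := by
  have hb' (n : ℕ) : (b n : ℂ) ≠ 0 := Complex.ofReal_ne_zero.mpr (hb n).ne'
  refine Nat.twoStepInduction (by simpa using h₀) ?_ fun n ih₀ ih₁ => ?_
  · refine mul_left_cancel₀ (hb' 0) ?_
    rw [← hq.1, h₀, hv₀]
    push_cast
    ring
  · refine mul_left_cancel₀ (hb' (n + 1)) ?_
    have hv' : (v (n + 1) : ℂ) + b n * v n = b (n + 1) * v (n + 2) := by exact_mod_cast hv n
    linear_combination -hq.2 n + Complex.I * ih₁ - b n * ih₀ - Complex.I ^ n * hv'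
      + Complex.I ^ n * (v (n + 1) - b (n + 1) * v (n + 2)) * Complex.I_sq

end Recurrence

theorem threeTermRec_aeval {P : ℕ → ℝ[X]} {b : ℕ → ℝ}
    (hrec0 : (X : ℝ[X]) * P 0 = C (b 0) * P 1)
    (hrec : ∀ n, 1 ≤ n → (X : ℝ[X]) * P n = C (b n) * P (n + 1) + C (b (n - 1)) * P (n - 1))
    (z : ℂ) : ThreeTermRec b z (fun n => aeval z (P n)) := by
  refine ⟨by simpa using congrArg (aeval z) hrec0, fun n => ?_⟩
  simpa using congrArg (aeval z) (hrec (n + 1) le_add_self)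

theorem abs_orthonormal_le_abs_at_i_general
    (P : ℕ → Polynomial ℝ)
    (hdeg : ∀ n, (P n).natDegree = n)
    (b : ℕ → ℝ) (hbpos : ∀ n, 0 < b n)
    (hrec0 : (X : Polynomial ℝ) * P 0 = C (b 0) * P 1)
    (hrec : ∀ n, 1 ≤ n →
      (X : Polynomial ℝ) * P n = C (b n) * P (n + 1) + C (b (n - 1)) * P (n - 1))
    (u : ℕ → ℝ) (hu : ∀ n, u n = ‖Polynomial.aeval Complex.I (P n)‖) :
    ∀ (n : ℕ) (z : ℂ), ‖z‖ ≤ 1 →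
      ‖Polynomial.aeval z (P n)‖ ≤ u n := by
  intro n z hz
  obtain ⟨c, hc⟩ := natDegree_eq_zero.mp (hdeg 0)
  have hP₀ (w : ℂ) : aeval w (P 0) = c := by simp [← hc]
  have hv₀ (a : ℝ) : a * majorant b 0 = b 0 * (a * majorant b 1) := by
    linear_combination a * majorant_zero_eq_mul_majorant_one (hbpos 0).ne'
  have hv (a : ℝ) (n : ℕ) : a * majorant b (n + 1) + b n * (a * majorant b n) =
      b (n + 1) * (a * majorant b (n + 2)) := by
    linear_combination a * majorant_succ_succ (hbpos (n + 1)).ne'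
  have hI : ∀ n, aeval Complex.I (P n) = Complex.I ^ n * (c * majorant b n : ℝ) :=
    eq_I_pow_mul_of_threeTermRec hbpos (threeTermRec_aeval hrec0 hrec _) (hv₀ c) (hv c)
      (by simp [hP₀])
  calc ‖aeval z (P n)‖ ≤ |c| * majorant b n :=
        norm_le_of_threeTermRec (v := fun n => |c| * majorant b n) hbpos hz
          (threeTermRec_aeval hrec0 hrec z) (hv₀ |c|) (hv |c|) (by simp [hP₀]) n
    _ ≤ |c * majorant b n| := by rw [abs_mul]; gcongr; exact le_abs_self _
    _ = u n := by simp [hu, hI]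

/-- For `|z| ≤ 1` one has `|P_n(z)| ≤ u_n = |P_n(i)|` for the orthonormal polynomials
of a symmetric probability measure with `b₀ = 1`. -/
theorem abs_orthonormal_le_abs_at_i
    (μ : Measure ℝ) [IsProbabilityMeasure μ]
    (hsym : Measure.map (fun x : ℝ => -x) μ = μ)
    (hmom : ∀ n : ℕ, Integrable (fun x => x ^ n) μ)
    (hsupp : ∀ p : Polynomial ℝ, p ≠ 0 → 0 < ∫ x, (p.eval x) ^ 2 ∂μ)
    (P : ℕ → Polynomial ℝ)
    (hdeg : ∀ n, (P n).natDegree = n)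
    (hlead : ∀ n, 0 < (P n).leadingCoeff)
    (horth : ∀ n m, ∫ x, (P n).eval x * (P m).eval x ∂μ = if n = m then 1 else 0)
    (b : ℕ → ℝ) (hbpos : ∀ n, 0 < b n) (hb0 : b 0 = 1)
    (hrec0 : (X : Polynomial ℝ) * P 0 = C (b 0) * P 1)
    (hrec : ∀ n, 1 ≤ n →
      (X : Polynomial ℝ) * P n = C (b n) * P (n + 1) + C (b (n - 1)) * P (n - 1))
    (u : ℕ → ℝ) (hu : ∀ n, u n = ‖Polynomial.aeval Complex.I (P n)‖) :
    ∀ (n : ℕ) (z : ℂ), ‖z‖ ≤ 1 →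
      ‖Polynomial.aeval z (P n)‖ ≤ u n :=
  abs_orthonormal_le_abs_at_i_general P hdeg b hbpos hrec0 hrec u hu
end

section
/- Let (P_n) satisfy the symmetric recurrence x P_n(x) = b_n P_{n+1}(x) + b_{n−1} P_{n−1}(x) with b₀ = 1, b_n > 0, and assume b_{n−1} + 1 ≤ b_n for all n ≥ 1. Setting u_n = |P_n(i)|, one has max(u_{2n}, u_{2n+1}) ≤ ∏_{k=1}^n max((1 + b_{2k−2})/b_{2k−1}, (1 + b_{2k−1})/b_{2k}) for all n ≥ 0. -/
/-!
Evaluating the recurrence at `x = i` and using `i² = -1` gives `P_n(i) = P_0(i) · iⁿ · v_n`, where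
`v_0 = v_1 = 1` and `b_{n+1} v_{n+2} = v_{n+1} + b_n v_n`; normalisation forces `|P_0(i)| = 1`, so
`u_n = v_n`. The recurrence gives `v_{n+2} ≤ (1 + b_n)/b_{n+1} · max(v_n, v_{n+1})`, and since
`1 + b_{2n} ≤ b_{2n+1}` this factor is at most `1` for even `n`. Hence passing from the pair
`(v_{2n}, v_{2n+1})` to `(v_{2n+2}, v_{2n+3})` multiplies the maximum by at most the `(n+1)`-st factor
of the product.
-/

open MeasureTheory Polynomial Finset

noncomputable def modulusAtI (b : ℕ → ℝ) : ℕ → ℝ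
  | 0 => 1
  | 1 => 1
  | n + 2 => (modulusAtI b (n + 1) + b n * modulusAtI b n) / b (n + 1)

namespace modulusAtI

variable {b : ℕ → ℝ}

theorem pos (hb : ∀ n, 0 < b n) : ∀ n, 0 < modulusAtI b n
  | 0 => one_pos
  | 1 => one_pos
  | n + 2 => by
    have := pos hb n
    have := pos hb (n + 1)
    have := hb n
    have := hb (n + 1)
    simp only [modulusAtI]
    positivity

theorem le_mul_max (hb : ∀ n, 0 < b n) (n : ℕ) :
    modulusAtI b (n + 2) ≤
      (1 + b n) / b (n + 1) * max (modulusAtI b n) (modulusAtI b (n + 1)) := by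
  set M := max (modulusAtI b n) (modulusAtI b (n + 1))
  calc modulusAtI b (n + 2)
      = (modulusAtI b (n + 1) + b n * modulusAtI b n) / b (n + 1) := rfl
    _ ≤ (M + b n * M) / b (n + 1) :=
      div_le_div_of_nonneg_right
        (add_le_add (le_max_right _ _) (mul_le_mul_of_nonneg_left (le_max_left _ _) (hb n).le))
        (hb _).le
    _ = (1 + b n) / b (n + 1) * M := by ring

theorem max_le_mul_max (hb : ∀ n, 0 < b n) (hgrow : ∀ n, b n + 1 ≤ b (n + 1)) (n : ℕ) :
    max (modulusAtI b (2 * n + 2)) (modulusAtI b (2 * n + 3)) ≤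
      max ((1 + b (2 * n)) / b (2 * n + 1)) ((1 + b (2 * n + 1)) / b (2 * n + 2)) *
        max (modulusAtI b (2 * n)) (modulusAtI b (2 * n + 1)) := by
  set A := (1 + b (2 * n)) / b (2 * n + 1)
  set B := (1 + b (2 * n + 1)) / b (2 * n + 2)
  set M := max (modulusAtI b (2 * n)) (modulusAtI b (2 * n + 1))
  have hM : 0 ≤ M := (pos hb _).le.trans (le_max_left _ _)
  have hA : A ≤ 1 := (div_le_one (hb _)).2 (by linarith [hgrow (2 * n)])
  have h2 : modulusAtI b (2 * n + 2) ≤ A * M := le_mul_max hb (2 * n)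
  have h3 : modulusAtI b (2 * n + 3) ≤ B * M :=
    calc modulusAtI b (2 * n + 3)
        ≤ B * max (modulusAtI b (2 * n + 1)) (modulusAtI b (2 * n + 2)) :=
          le_mul_max hb (2 * n + 1)
      _ ≤ B * M := by
        have hB : 0 ≤ B := div_nonneg (by linarith [hb (2 * n + 1)]) (hb _).le
        gcongr
        exact max_le (le_max_right _ _) (h2.trans (mul_le_of_le_one_left hM hA))
  exact max_le (h2.trans (by gcongr; exact le_max_left _ _))
    (h3.trans (by gcongr; exact le_max_right _ _))

theorem max_le_prod (hb : ∀ n, 0 < b n) (hgrow : ∀ n, b n + 1 ≤ b (n + 1)) (n : ℕ) :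
    max (modulusAtI b (2 * n)) (modulusAtI b (2 * n + 1)) ≤
      ∏ k ∈ Icc 1 n, max ((1 + b (2 * k - 2)) / b (2 * k - 1)) ((1 + b (2 * k - 1)) / b (2 * k)) := by
  induction n with
  | zero => simp [modulusAtI]
  | succ n ih =>
    rw [prod_Icc_succ_top (by omega)]
    simp only [show 2 * (n + 1) = 2 * n + 2 by ring, show 2 * n + 2 - 2 = 2 * n by omega,
      show 2 * n + 2 - 1 = 2 * n + 1 by omega, show 2 * n + 2 + 1 = 2 * n + 3 by ring]
    have hfac : 0 ≤ max ((1 + b (2 * n)) / b (2 * n + 1)) ((1 + b (2 * n + 1)) / b (2 * n + 2)) :=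
      le_max_of_le_left (div_nonneg (by linarith [hb (2 * n)]) (hb _).le)
    exact (max_le_mul_max hb hgrow n).trans
      ((mul_le_mul_of_nonneg_left ih hfac).trans_eq (mul_comm _ _))

end modulusAtI

theorem eq_mul_I_pow_mul_modulusAtI {b : ℕ → ℝ} (hb : ∀ n, b n ≠ 0) {z : ℕ → ℂ}
    (h1 : z 1 = Complex.I * z 0)
    (hrec : ∀ n, Complex.I * z (n + 1) = b (n + 1) * z (n + 2) + b n * z n) :
    ∀ n, z n = z 0 * Complex.I ^ n * modulusAtI b n
  | 0 => by simp [modulusAtI]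
  | 1 => by simp [modulusAtI, h1, mul_comm]
  | n + 2 => by
    have ih₀ := eq_mul_I_pow_mul_modulusAtI hb h1 hrec n
    have ih₁ := eq_mul_I_pow_mul_modulusAtI hb h1 hrec (n + 1)
    have hb₁ : (b (n + 1) : ℂ) ≠ 0 := Complex.ofReal_ne_zero.2 (hb _)
    simp only [modulusAtI]
    push_cast
    field_simp
    linear_combination (-(b n : ℂ) * z 0 * Complex.I ^ n * modulusAtI b n) * Complex.I_sq
      - hrec n + Complex.I * ih₁ - b n * ih₀

theorem norm_aeval_I_of_natDegree_eq_zero {μ : Measure ℝ} [IsProbabilityMeasure μ] {p : ℝ[X]}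
    (hdeg : p.natDegree = 0) (hnorm : ∫ x, p.eval x * p.eval x ∂μ = 1) :
    ‖aeval Complex.I p‖ = 1 := by
  rw [eq_C_of_natDegree_eq_zero hdeg] at hnorm ⊢
  simp only [eval_C, integral_const, probReal_univ, one_smul] at hnorm
  rcases mul_self_eq_one_iff.mp hnorm with h | h <;> simp [h]

theorem abs_orthonormal_at_i_product_bound_general
    (μ : Measure ℝ) [IsProbabilityMeasure μ]
    (P : ℕ → Polynomial ℝ)
    (hdeg : ∀ n, (P n).natDegree = n)
    (horth : ∀ n m, ∫ x, (P n).eval x * (P m).eval x ∂μ = if n = m then 1 else 0)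
    (b : ℕ → ℝ) (hbpos : ∀ n, 0 < b n) (hb0 : b 0 = 1)
    (hgrow : ∀ n, 1 ≤ n → b (n - 1) + 1 ≤ b n)
    (hrec0 : (X : Polynomial ℝ) * P 0 = C (b 0) * P 1)
    (hrec : ∀ n, 1 ≤ n →
      (X : Polynomial ℝ) * P n = C (b n) * P (n + 1) + C (b (n - 1)) * P (n - 1))
    (u : ℕ → ℝ) (hu : ∀ n, u n = ‖Polynomial.aeval Complex.I (P n)‖) :
    ∀ n : ℕ, max (u (2 * n)) (u (2 * n + 1)) ≤
      ∏ k ∈ Finset.Icc 1 n,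
        max ((1 + b (2 * k - 2)) / b (2 * k - 1)) ((1 + b (2 * k - 1)) / b (2 * k)) := by
  have hP0 : ‖aeval Complex.I (P 0)‖ = 1 :=
    norm_aeval_I_of_natDegree_eq_zero (μ := μ) (hdeg 0) (by simpa using horth 0 0)
  have hP : ∀ n, aeval Complex.I (P n) = aeval Complex.I (P 0) * Complex.I ^ n * modulusAtI b n := by
    refine eq_mul_I_pow_mul_modulusAtI (fun n => (hbpos n).ne') ?_ fun n => ?_
    · simpa [hb0] using (congrArg (aeval Complex.I) hrec0).symm
    · simpa using congrArg (aeval Complex.I) (hrec (n + 1) (by omega))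
  have hu_eq : ∀ n, u n = modulusAtI b n := fun n => by
    rw [hu, hP, norm_mul, norm_mul, hP0, norm_pow, Complex.norm_I, Complex.norm_real,
      Real.norm_of_nonneg (modulusAtI.pos hbpos n).le, one_pow, one_mul, one_mul]
  intro n
  simp only [hu_eq]
  exact modulusAtI.max_le_prod hbpos (fun n => by simpa using hgrow (n + 1) (by omega)) n

/-- If `b₀ = 1` and `b_{n-1} + 1 ≤ b_n`, then
`max(u_{2n}, u_{2n+1}) ≤ ∏_{k=1}^n max((1+b_{2k-2})/b_{2k-1}, (1+b_{2k-1})/b_{2k})`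
where `u_n = |P_n(i)|`. -/
theorem abs_orthonormal_at_i_product_bound
    (μ : Measure ℝ) [IsProbabilityMeasure μ]
    (hsym : Measure.map (fun x : ℝ => -x) μ = μ)
    (hmom : ∀ n : ℕ, Integrable (fun x => x ^ n) μ)
    (hsupp : ∀ p : Polynomial ℝ, p ≠ 0 → 0 < ∫ x, (p.eval x) ^ 2 ∂μ)
    (P : ℕ → Polynomial ℝ)
    (hdeg : ∀ n, (P n).natDegree = n)
    (hlead : ∀ n, 0 < (P n).leadingCoeff)
    (horth : ∀ n m, ∫ x, (P n).eval x * (P m).eval x ∂μ = if n = m then 1 else 0)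
    (b : ℕ → ℝ) (hbpos : ∀ n, 0 < b n) (hb0 : b 0 = 1)
    (hgrow : ∀ n, 1 ≤ n → b (n - 1) + 1 ≤ b n)
    (hrec0 : (X : Polynomial ℝ) * P 0 = C (b 0) * P 1)
    (hrec : ∀ n, 1 ≤ n →
      (X : Polynomial ℝ) * P n = C (b n) * P (n + 1) + C (b (n - 1)) * P (n - 1))
    (u : ℕ → ℝ) (hu : ∀ n, u n = ‖Polynomial.aeval Complex.I (P n)‖) :
    ∀ n : ℕ, max (u (2 * n)) (u (2 * n + 1)) ≤
      ∏ k ∈ Finset.Icc 1 n,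
        max ((1 + b (2 * k - 2)) / b (2 * k - 1)) ((1 + b (2 * k - 1)) / b (2 * k)) :=
  abs_orthonormal_at_i_product_bound_general μ P hdeg horth b hbpos hb0 hgrow hrec0 hrec u hu
end

section
/- Let (e_n) be an increasing sequence of positive real numbers with e₀ > 1 and e_n → ∞. Then there exists a strictly increasing concave sequence (d_n) (i.e. d_{n+1} − d_n is nonincreasing) with d₀ = 1, d_n ≤ e_n for all n, and d_n → ∞. -/
open Filter

noncomputable def dcAux (e : ℕ → ℝ) : ℕ → ℝ × ℝ
  | 0 => (1, (e 1 - 1) / 2)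
  | n + 1 => ((dcAux e n).1 + (dcAux e n).2,
      min (dcAux e n).2 ((e (n + 2) - ((dcAux e n).1 + (dcAux e n).2)) / 2))

/-- Below any increasing sequence `(e_n)` with `e₀ > 1` tending to infinity, there is a
strictly increasing concave sequence `(d_n)` with `d₀ = 1` tending to infinity. -/
theorem exists_concave_minorant (e : ℕ → ℝ) (hpos : ∀ n, 0 < e n)
    (hmono : Monotone e) (he0 : 1 < e 0)
    (hlim : Tendsto e atTop atTop) :
    ∃ d : ℕ → ℝ, d 0 = 1 ∧ StrictMono d ∧
      (∀ n, d (n + 2) - d (n + 1) ≤ d (n + 1) - d n) ∧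
      (∀ n, d n ≤ e n) ∧ Tendsto d atTop atTop := by
  set d : ℕ → ℝ := fun n => (dcAux e n).1 with hd
  set c : ℕ → ℝ := fun n => (dcAux e n).2 with hc
  have hd0 : d 0 = 1 := rfl
  have hstep : ∀ n, d (n + 1) = d n + c n := fun n => rfl
  have hc0 : c 0 = (e 1 - 1) / 2 := rfl
  have hcs : ∀ n, c (n + 1) = min (c n) ((e (n + 2) - d (n + 1)) / 2) := fun n => rfl
  -- main invariant
  have inv : ∀ n, d n < e n ∧ 0 < c n ∧ c n ≤ (e (n + 1) - d n) / 2 := by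
    intro n
    induction n with
    | zero =>
      have h1 : 1 < e 1 := lt_of_lt_of_le he0 (hmono (Nat.zero_le 1))
      refine ⟨he0, ?_, ?_⟩
      · rw [hc0]; linarith
      · rw [hc0, hd0]
    | succ n ih =>
      obtain ⟨h1, h2, h3⟩ := ih
      have hmn : e n ≤ e (n + 1) := hmono (Nat.le_succ n)
      have hmn2 : e (n + 1) ≤ e (n + 2) := hmono (Nat.le_succ (n + 1))
      have hlt : d (n + 1) < e (n + 1) := by
        rw [hstep]; linarith
      refine ⟨hlt, ?_, ?_⟩
      · rw [hcs]
        apply lt_min h2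
        linarith
      · rw [hcs]; exact min_le_right _ _
  have hcpos : ∀ n, 0 < c n := fun n => (inv n).2.1
  have hmono_d : StrictMono d := by
    apply strictMono_nat_of_lt_succ
    intro n
    rw [hstep]
    linarith [hcpos n]
  have hconc : ∀ n, d (n + 2) - d (n + 1) ≤ d (n + 1) - d n := by
    intro n
    rw [hstep (n + 1), hstep n]
    have : c (n + 1) ≤ c n := by rw [hcs]; exact min_le_left _ _
    linarith
  have hle : ∀ n, d n ≤ e n := fun n => (inv n).1.le
  refine ⟨d, hd0, hmono_d, hconc, hle, ?_⟩
  -- tendsto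
  apply tendsto_atTop_atTop_of_monotone' hmono_d.monotone
  rintro ⟨M, hM⟩
  have hM' : ∀ n, d n ≤ M := fun n => hM (Set.mem_range_self n)
  obtain ⟨N, hN⟩ := (tendsto_atTop.1 hlim (M + 1)).exists_forall_of_atTop
  set ε : ℝ := min (c N) (1 / 2) with hε
  have hεpos : 0 < ε := lt_min (hcpos N) (by norm_num)
  have hcge : ∀ k, ε ≤ c (N + k) := by
    intro k
    induction k with
    | zero => exact min_le_left _ _
    | succ k ih =>
      have : (N + (k + 1)) = (N + k) + 1 := by ring
      rw [this, hcs]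
      apply le_min (le_trans ih (le_refl _))
      have he2 : M + 1 ≤ e (N + k + 2) := hN _ (by omega)
      have hd2 : d (N + k + 1) ≤ M := hM' _
      have : (1 : ℝ) / 2 ≤ (e (N + k + 2) - d (N + k + 1)) / 2 := by linarith
      exact le_trans (min_le_right _ _) this
  have hgrow : ∀ k, d N + k * ε ≤ d (N + k) := by
    intro k
    induction k with
    | zero => simp
    | succ k ih =>
      have : (N + (k + 1)) = (N + k) + 1 := by ring
      rw [this, hstep]
      have := hcge k
      push_cast
      linarith
  obtain ⟨k, hk⟩ := exists_nat_gt ((M - d N) / ε)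
  have : M - d N < k * ε := (div_lt_iff₀ hεpos).1 hk
  have := hgrow k
  have := hM' (N + k)
  linarith
end

section
/- Let (d_n) be a sequence of reals with d_n → ∞, and let (b_n) be positive reals such that 1/b_{2n} > (d_{2n} − d_{2n−2})/(2(2 + d_{2n})) for all n ≥ 1, where (d_{2n}) is increasing. Then Σ_{n=1}^∞ 1/b_{2n} = ∞. -/
open Filter

/-- If `1/b_{2n} > (d_{2n} - d_{2n-2})/(2(2 + d_{2n}))` with `(d_{2n})` increasing to
infinity, then `∑ 1/b_{2n} = ∞`. -/
theorem sum_reciprocal_b_diverges (d b : ℕ → ℝ) (hbpos : ∀ n, 0 < b n)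
    (hmono : Monotone fun n => d (2 * n))
    (hlim : Tendsto (fun n => d (2 * n)) atTop atTop)
    (hineq : ∀ n : ℕ,
      1 / b (2 * (n + 1)) > (d (2 * (n + 1)) - d (2 * n)) / (2 * (2 + d (2 * (n + 1))))) :
    ¬ Summable (fun n : ℕ => 1 / b (2 * (n + 1))) := by
  intro h
  set f : ℕ → ℝ := fun n => 1 / b (2 * (n + 1)) with hf
  have hf0 : ∀ n, 0 ≤ f n := fun n => le_of_lt (one_div_pos.mpr (hbpos _))
  have hts := h.hasSum.tendsto_sum_nat
  -- choose N with partial sum close to tsum and d(2N) ≥ 0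
  have hev1 : ∀ᶠ N in atTop, ∑' n, f n - 1/4 < ∑ i ∈ Finset.range N, f i :=
    hts.eventually (eventually_gt_nhds (by linarith [show (0:ℝ) < 1/4 by norm_num]))
  have hev2 : ∀ᶠ N in atTop, (0:ℝ) ≤ d (2 * N) := hlim.eventually_ge_atTop 0
  obtain ⟨N, hN1, hN2⟩ := (hev1.and hev2).exists
  -- choose M ≥ N with d(2M) large
  have hev3 : ∀ᶠ M in atTop, 2 + 2 * d (2 * N) < d (2 * M) :=
    hlim.eventually_gt_atTop _
  obtain ⟨M, hM1, hM2⟩ := (hev3.and (eventually_ge_atTop (N + 1))).exists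
  have hNM : N ≤ M := le_trans (Nat.le_succ N) hM2
  have hdM0 : 0 ≤ d (2 * M) := le_trans hN2 (hmono hNM)
  -- key lower bound on the block sum
  have key : (d (2 * M) - d (2 * N)) / (2 * (2 + d (2 * M)))
      ≤ ∑ n ∈ Finset.Ico N M, f n := by
    have h1 : ∑ n ∈ Finset.Ico N M, (d (2 * (n + 1)) - d (2 * n)) / (2 * (2 + d (2 * M)))
        ≤ ∑ n ∈ Finset.Ico N M, f n := by
      apply Finset.sum_le_sum
      intro n hn
      obtain ⟨hn1, hn2⟩ := Finset.mem_Ico.mp hn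
      have hd1 : (0:ℝ) ≤ d (2 * (n + 1)) := le_trans hN2 (hmono (by omega))
      have hd2 : d (2 * (n + 1)) ≤ d (2 * M) := hmono (by omega)
      have hd3 : d (2 * n) ≤ d (2 * (n + 1)) := hmono (by omega)
      refine le_trans ?_ (le_of_lt (hineq n))
      apply div_le_div_of_nonneg_left (by linarith) (by linarith) (by linarith)
    refine le_trans (le_of_eq ?_) h1
    rw [← Finset.sum_div]
    congr 1
    rw [Finset.sum_Ico_eq_sub _ hNM, Finset.sum_range_sub (fun n => d (2 * n)),
      Finset.sum_range_sub (fun n => d (2 * n))]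
    ring
  -- upper bound on the block sum via summability
  have hub : ∑ n ∈ Finset.Ico N M, f n < 1/4 := by
    have h2 : ∑ i ∈ Finset.range M, f i ≤ ∑' n, f n :=
      Summable.sum_le_tsum _ (fun i _ => hf0 i) h
    have h3 : ∑ n ∈ Finset.Ico N M, f n
        = ∑ i ∈ Finset.range M, f i - ∑ i ∈ Finset.range N, f i :=
      Finset.sum_Ico_eq_sub _ hNM
    linarith
  -- but the lower bound exceeds 1/4
  have hlb : 1/4 < (d (2 * M) - d (2 * N)) / (2 * (2 + d (2 * M))) := by
    rw [lt_div_iff₀ (by linarith)]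
    nlinarith
  linarith
end

section
/- Let μ be a positive measure on ℝ with moments s_n of all orders and infinite support, with orthonormal polynomials P_n(x) = Σ_{k≤n} b_{k,n} x^k. Then the smallest eigenvalues λ_N of the Hankel matrices H_N = (s_{n+m})_{n,m≤N} are bounded below by a constant c > 0 for all N if and only if the infinite upper triangular matrix B = (b_{k,n}) defines a bounded operator on ℓ² with norm at most 1/√c. -/
/-!
Expand a polynomial as `q = ∑ βₙ Pₙ`. By orthonormality `∫ q² dμ = ∑ βₙ²`, while the Hankel form
evaluated at the coefficient vector of `q`, which is `Bβ`, is also `∫ q² dμ`. So `λ_N ≥ c` for all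
`N` says exactly that `c ‖Bβ‖² ≤ ‖β‖²` for every finitely supported `β`, i.e. that `B` is bounded by
`1/√c` on a dense subspace of `ℓ²`, and it then extends by continuity.
-/

open MeasureTheory Polynomial Finset
open scoped ENNReal

namespace lp

variable {𝕜 ι E : Type*} [NontriviallyNormedField 𝕜] [DecidableEq ι] {p : ℝ≥0∞}

variable (p) in
noncomputable def ofFinsupp : (ι →₀ 𝕜) →ₗ[𝕜] lp (fun _ : ι => 𝕜) p :=
  Finsupp.lsum 𝕜 fun i => lp.lsingle (E := fun _ : ι => 𝕜) p i

@[simp]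
theorem ofFinsupp_single (i : ι) (a : 𝕜) : ofFinsupp p (Finsupp.single i a) = lp.single p i a := by
  simp [ofFinsupp]

theorem ofFinsupp_eq_sum (β : ι →₀ 𝕜) :
    ofFinsupp p β = ∑ i ∈ β.support, lp.single p i (β i) := by
  simp [ofFinsupp, Finsupp.sum]

theorem norm_ofFinsupp_rpow (hp : 0 < p.toReal) (β : ι →₀ 𝕜) :
    ‖ofFinsupp p β‖ ^ p.toReal = β.sum fun _ a => ‖a‖ ^ p.toReal := by
  rw [ofFinsupp_eq_sum, lp.norm_sum_single hp, Finsupp.sum]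

variable [Fact (1 ≤ p)]

theorem denseRange_ofFinsupp (hp : p ≠ ∞) : DenseRange (ofFinsupp p : (ι →₀ 𝕜) → _) := by
  intro x
  refine mem_closure_of_tendsto (lp.hasSum_single hp x) (Filter.Eventually.of_forall fun s => ?_)
  refine ⟨∑ i ∈ s, Finsupp.single i (x i), ?_⟩
  simp

variable [NormedAddCommGroup E] [NormedSpace 𝕜 E] [CompleteSpace E]

theorem exists_opNorm_le_iff (hp : p ≠ ∞) (f : (ι →₀ 𝕜) →ₗ[𝕜] E) {C : ℝ} (hC : 0 ≤ C) :
    (∃ T : lp (fun _ : ι => 𝕜) p →L[𝕜] E,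
        ‖T‖ ≤ C ∧ ∀ i, T (lp.single p i 1) = f (Finsupp.single i 1)) ↔
      ∀ β, ‖f β‖ ≤ C * ‖ofFinsupp p β‖ := by
  constructor
  · rintro ⟨T, hT, hTf⟩ β
    have hcomp : T.toLinearMap ∘ₗ ofFinsupp p = f :=
      Finsupp.lhom_ext' fun i => LinearMap.ext_ring (by simpa using hTf i)
    rw [← hcomp]
    exact (T.le_opNorm _).trans (by gcongr)
  · intro hf
    have hdense := denseRange_ofFinsupp (𝕜 := 𝕜) (ι := ι) hp
    refine ⟨f.extendOfNorm (ofFinsupp p), ?_, fun i => ?_⟩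
    · exact LinearMap.opNorm_extendOfNorm_le hdense hC hf
    · rw [← ofFinsupp_single]
      exact LinearMap.extendOfNorm_eq hdense ⟨C, hf⟩ _

end lp

namespace Polynomial

variable {𝕜 : Type*} [NormedField 𝕜] {p : ℝ≥0∞}

variable (p) in
noncomputable def coeffLp : 𝕜[X] →ₗ[𝕜] lp (fun _ : ℕ => 𝕜) p :=
  lsum fun n => lp.lsingle (E := fun _ : ℕ => 𝕜) p n

theorem coeffLp_apply (q : 𝕜[X]) (k : ℕ) : (coeffLp p q : ℕ → 𝕜) k = q.coeff k := by
  rw [coeffLp, lsum_apply, Polynomial.sum_def]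
  simp only [lp.lsingle_apply, lp.coeFn_sum, Finset.sum_apply, lp.coeFn_single]
  rw [Finset.sum_eq_single k (fun n _ hnk => Pi.single_eq_of_ne hnk.symm _)
    (fun hk => by rw [Pi.single_eq_same, notMem_support_iff.mp hk]), Pi.single_eq_same]

theorem norm_coeffLp_rpow (hp : 0 < p.toReal) (q : 𝕜[X]) :
    ‖coeffLp p q‖ ^ p.toReal = q.sum fun _ a => ‖a‖ ^ p.toReal := by
  simp only [coeffLp, lsum_apply, Polynomial.sum_def, lp.lsingle_apply, lp.norm_sum_single hp]

theorem linearCombination_surjective_of_natDegree_eq {K : Type*} [Field K] {P : ℕ → K[X]}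
    (hdeg : ∀ n, (P n).natDegree = n) (hP : ∀ n, P n ≠ 0) :
    Function.Surjective (Finsupp.linearCombination K P) := by
  let S : Sequence K := ⟨P, fun n => by rw [degree_eq_natDegree (hP n), hdeg]⟩
  rw [← LinearMap.range_eq_top, Finsupp.range_linearCombination]
  exact S.span fun n => (leadingCoeff_ne_zero.mpr (hP n)).isUnit

end Polynomial

section Moments

variable {μ : Measure ℝ} (hmom : ∀ n : ℕ, Integrable (fun x => x ^ n) μ)
include hmom

theorem Polynomial.integrable_eval (q : ℝ[X]) : Integrable (fun x => q.eval x) μ := by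
  simp_rw [eval_eq_sum_range]
  exact integrable_finsetSum _ fun i _ => (hmom i).const_mul _

theorem Polynomial.integral_eval_sq_eq_sum_moments {s : ℕ → ℝ} (hs : ∀ n, s n = ∫ x, x ^ n ∂μ)
    {M : ℕ} {q : ℝ[X]} (hq : q.degree < M) :
    ∫ x, q.eval x ^ 2 ∂μ = ∑ i : Fin M, ∑ j : Fin M, s (i + j) * q.coeff i * q.coeff j := by
  have hexpand : ∀ x, q.eval x ^ 2 =
      ∑ i : Fin M, ∑ j : Fin M, q.coeff i * q.coeff j * x ^ ((i : ℕ) + j) := by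
    intro x
    rw [eval_eq_sum, ← sum_fin (fun e a => a * x ^ e) (fun _ => zero_mul _) hq, sq, sum_mul_sum]
    simp only [pow_add]
    exact sum_congr rfl fun i _ => sum_congr rfl fun j _ => by ring
  simp_rw [hexpand]
  rw [integral_finsetSum _ fun i _ => integrable_finsetSum _ fun j _ => (hmom _).const_mul _]
  refine sum_congr rfl fun i _ => ?_
  rw [integral_finsetSum _ fun j _ => (hmom _).const_mul _]
  refine sum_congr rfl fun j _ => ?_
  rw [integral_const_mul, hs]
  ring

theorem Polynomial.integral_eval_linearCombination_sq {ι : Type*} [DecidableEq ι] {P : ι → ℝ[X]}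
    (horth : ∀ n m, ∫ x, (P n).eval x * (P m).eval x ∂μ = if n = m then 1 else 0)
    (β : ι →₀ ℝ) :
    ∫ x, (Finsupp.linearCombination ℝ P β).eval x ^ 2 ∂μ = β.sum fun _ a => a ^ 2 := by
  have hexpand : ∀ x, (Finsupp.linearCombination ℝ P β).eval x ^ 2 =
      ∑ n ∈ β.support, ∑ m ∈ β.support, β n * β m * ((P n).eval x * (P m).eval x) := by
    intro x
    simp only [Finsupp.linearCombination_apply, Finsupp.sum, eval_finsetSum, eval_smul,
      smul_eq_mul, sq, sum_mul_sum]
    exact sum_congr rfl fun n _ => sum_congr rfl fun m _ => by ring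
  have hint : ∀ n m, Integrable (fun x => (P n).eval x * (P m).eval x) μ := fun n m => by
    simpa using (P n * P m).integrable_eval hmom
  simp_rw [hexpand]
  rw [integral_finsetSum _ fun n _ => integrable_finsetSum _ fun m _ => (hint n m).const_mul _]
  refine sum_congr rfl fun n hn => ?_
  rw [integral_finsetSum _ fun m _ => (hint n m).const_mul _]
  simp_rw [integral_const_mul, horth, mul_ite, mul_one, mul_zero, sum_ite_eq, if_pos hn, sq]

end Moments

theorem mul_sum_sq_le_of_forall_sum_sq_eq_one {ι : Type*} [Fintype ι] (H : ι → ι → ℝ) {c : ℝ}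
    (h : ∀ a : ι → ℝ, ∑ i, a i ^ 2 = 1 → c ≤ ∑ i, ∑ j, H i j * a i * a j) (a : ι → ℝ) :
    c * ∑ i, a i ^ 2 ≤ ∑ i, ∑ j, H i j * a i * a j := by
  set r := ∑ i, a i ^ 2
  have hr : 0 ≤ r := sum_nonneg fun i _ => sq_nonneg _
  rcases hr.eq_or_lt with hr0 | hrpos
  · have ha : a = 0 := funext fun i => pow_eq_zero_iff two_ne_zero |>.mp <|
      (sum_eq_zero_iff_of_nonneg fun i _ => sq_nonneg (a i)).mp hr0.symm i (mem_univ i)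
    simp [ha, r]
  · set t := √r
    have ht : t ^ 2 = r := Real.sq_sqrt hr
    have htpos : 0 < t := Real.sqrt_pos.mpr hrpos
    have hunit : ∑ i, (a i / t) ^ 2 = 1 := by
      simp only [div_pow]
      rw [← sum_div, ht, div_self hrpos.ne']
    have hscale :
        ∑ i, ∑ j, H i j * (a i / t) * (a j / t) = (∑ i, ∑ j, H i j * a i * a j) / r := by
      rw [← ht, sum_div]
      refine sum_congr rfl fun i _ => ?_
      rw [sum_div]
      refine sum_congr rfl fun j _ => ?_
      field_simp
    have := h _ hunit
    rw [hscale, le_div_iff₀ hrpos] at this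
    linarith

/-- Its least element is the smallest eigenvalue `λ_N` of the Hankel matrix `(s (i + j))_{i,j ≤ N}`. -/
def hankelRayleighValues (s : ℕ → ℝ) (N : ℕ) : Set ℝ :=
  {r | ∃ a : Fin (N + 1) → ℝ, (∑ i : Fin (N + 1), (a i) ^ 2) = 1 ∧
    r = ∑ i : Fin (N + 1), ∑ j : Fin (N + 1), s ((i : ℕ) + (j : ℕ)) * a i * a j}

theorem forall_le_hankel_least_iff_mul_sum_coeff_sq_le_integral {μ : Measure ℝ}
    (hmom : ∀ n : ℕ, Integrable (fun x => x ^ n) μ) {s : ℕ → ℝ} (hs : ∀ n, s n = ∫ x, x ^ n ∂μ)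
    {lam : ℕ → ℝ} (hlam : ∀ N, IsLeast (hankelRayleighValues s N) (lam N)) (c : ℝ) :
    (∀ N, c ≤ lam N) ↔ ∀ q : ℝ[X], c * q.sum (fun _ a => a ^ 2) ≤ ∫ x, q.eval x ^ 2 ∂μ := by
  have hsq : ∀ _ : ℕ, (0 : ℝ) ^ 2 = 0 := fun _ => zero_pow two_ne_zero
  constructor
  · intro h q
    have hq : q.degree < ↑(q.natDegree + 1) :=
      degree_le_natDegree.trans_lt (by exact_mod_cast q.natDegree.lt_succ_self)
    have := mul_sum_sq_le_of_forall_sum_sq_eq_one (fun i j : Fin (q.natDegree + 1) => s (i + j))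
      (fun a ha => (h _).trans ((hlam _).2 ⟨a, ha, rfl⟩)) (fun i => q.coeff i)
    rwa [sum_fin (fun _ a => a ^ 2) hsq hq, ← integral_eval_sq_eq_sum_moments hmom hs hq] at this
  · intro h N
    obtain ⟨⟨a, ha, hval⟩, -⟩ := hlam N
    set q := ∑ i : Fin (N + 1), C (a i) * X ^ (i : ℕ)
    have hq : q.degree < ↑(N + 1) := degree_sum_fin_lt a
    have hcoeff : ∀ i : Fin (N + 1), q.coeff i = a i := fun i => by
      simp [q, finsetSum_coeff, Fin.val_inj]
    have := h q
    rw [← sum_fin (fun _ a => a ^ 2) hsq hq, integral_eval_sq_eq_sum_moments hmom hs hq] at this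
    simpa only [hval, hcoeff, ha, mul_one] using this

theorem mul_sq_le_sq_iff_le_one_div_sqrt_mul {c x y : ℝ} (hc : 0 < c) (hx : 0 ≤ x) (hy : 0 ≤ y) :
    c * x ^ 2 ≤ y ^ 2 ↔ x ≤ 1 / √c * y := by
  have hsc : 0 < √c := Real.sqrt_pos.mpr hc
  rw [one_div_mul_eq_div, le_div_iff₀ hsc, ← pow_le_pow_iff_left₀ (by positivity) hy two_ne_zero,
    mul_pow, Real.sq_sqrt hc.le, mul_comm]

theorem eigenvalue_lower_bound_iff_bounded_operator_general
    (μ : Measure ℝ)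
    (hmom : ∀ n : ℕ, Integrable (fun x => x ^ n) μ)
    (s : ℕ → ℝ) (hs : ∀ n, s n = ∫ x, x ^ n ∂μ)
    (P : ℕ → Polynomial ℝ)
    (hdeg : ∀ n, (P n).natDegree = n)
    (horth : ∀ n m, ∫ x, (P n).eval x * (P m).eval x ∂μ = if n = m then 1 else 0)
    (lam : ℕ → ℝ)
    (hlam : ∀ N, IsLeast {r : ℝ | ∃ a : Fin (N + 1) → ℝ,
        (∑ i : Fin (N + 1), (a i) ^ 2) = 1 ∧
        r = ∑ i : Fin (N + 1), ∑ j : Fin (N + 1), s ((i : ℕ) + (j : ℕ)) * a i * a j}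
      (lam N))
    (c : ℝ) (hc : 0 < c) :
    (∀ N, c ≤ lam N) ↔
      ∃ T : lp (fun _ : ℕ => ℝ) 2 →L[ℝ] lp (fun _ : ℕ => ℝ) 2,
        ‖T‖ ≤ 1 / Real.sqrt c ∧
        ∀ k n : ℕ, (T (lp.single 2 n 1) : ∀ _ : ℕ, ℝ) k = (P n).coeff k := by
  have hP : ∀ n, P n ≠ 0 := fun n hn => by simpa [hn] using horth n n
  set B := coeffLp 2 ∘ₗ Finsupp.linearCombination ℝ P
  have hB : ∀ β, c * (Finsupp.linearCombination ℝ P β).sum (fun _ a => a ^ 2) ≤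
        ∫ x, (Finsupp.linearCombination ℝ P β).eval x ^ 2 ∂μ ↔
      ‖B β‖ ≤ 1 / √c * ‖lp.ofFinsupp 2 β‖ := fun β => by
    have hBβ := norm_coeffLp_rpow (p := 2) (by norm_num) (Finsupp.linearCombination ℝ P β)
    have hβ := lp.norm_ofFinsupp_rpow (p := 2) (by norm_num) β
    simp only [ENNReal.toReal_ofNat, Real.rpow_two, Real.norm_eq_abs, sq_abs] at hBβ hβ
    rw [integral_eval_linearCombination_sq hmom horth, ← hBβ, ← hβ]
    exact mul_sq_le_sq_iff_le_one_div_sqrt_mul hc (norm_nonneg _) (norm_nonneg _)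
  rw [forall_le_hankel_least_iff_mul_sum_coeff_sq_le_integral hmom hs hlam,
    (linearCombination_surjective_of_natDegree_eq hdeg hP).forall, forall_congr' hB,
    ← lp.exists_opNorm_le_iff (p := 2) ENNReal.ofNat_ne_top B (by positivity)]
  refine exists_congr fun T => and_congr_right fun _ => ?_
  rw [forall_comm]
  refine forall_congr' fun n => ?_
  simp [B, lp.ext_iff, funext_iff, coeffLp_apply]

/-- The smallest Hankel eigenvalues are bounded below by `c > 0` iff the upper triangular
coefficient matrix `B = (b_{k,n})` of the orthonormal polynomials defines a bounded
operator on `ℓ²` of norm at most `1/√c`. -/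
theorem eigenvalue_lower_bound_iff_bounded_operator
    (μ : Measure ℝ)
    (hmom : ∀ n : ℕ, Integrable (fun x => x ^ n) μ)
    (hsupp : ∀ p : Polynomial ℝ, p ≠ 0 → 0 < ∫ x, (p.eval x) ^ 2 ∂μ)
    (s : ℕ → ℝ) (hs : ∀ n, s n = ∫ x, x ^ n ∂μ)
    (P : ℕ → Polynomial ℝ)
    (hdeg : ∀ n, (P n).natDegree = n)
    (hlead : ∀ n, 0 < (P n).leadingCoeff)
    (horth : ∀ n m, ∫ x, (P n).eval x * (P m).eval x ∂μ = if n = m then 1 else 0)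
    (lam : ℕ → ℝ)
    (hlam : ∀ N, IsLeast {r : ℝ | ∃ a : Fin (N + 1) → ℝ,
        (∑ i : Fin (N + 1), (a i) ^ 2) = 1 ∧
        r = ∑ i : Fin (N + 1), ∑ j : Fin (N + 1), s ((i : ℕ) + (j : ℕ)) * a i * a j}
      (lam N))
    (c : ℝ) (hc : 0 < c) :
    (∀ N, c ≤ lam N) ↔
      ∃ T : lp (fun _ : ℕ => ℝ) 2 →L[ℝ] lp (fun _ : ℕ => ℝ) 2,
        ‖T‖ ≤ 1 / Real.sqrt c ∧
        ∀ k n : ℕ, (T (lp.single 2 n 1) : ∀ _ : ℕ, ℝ) k = (P n).coeff k :=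
  eigenvalue_lower_bound_iff_bounded_operator_general μ hmom s hs P hdeg horth lam hlam c hc
end

section
/- Let μ correspond to an indeterminate moment problem with orthonormal polynomials (P_n). Define K(z,w) = Σ_{n=0}^∞ P_n(z)P_n(w) = Σ_{j,k} a_{j,k} z^j w^k and the matrix A = (a_{j,k}). Then A = B B^*, where B = (b_{k,n}) is the coefficient matrix of the P_n; in particular a_{j,k} = Σ_{n=max(j,k)}^∞ b_{j,n} b_{k,n}, the series converging absolutely. -/
/-!
The functions of the second kind `q_n = ∫ P_n(x) (x - i)⁻¹ dμ(x)` are the Fourier coefficients of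
the bounded function `(x - i)⁻¹` with respect to the orthonormal system `(P_n)` of `L²(μ)`, so
`(q_n) ∈ ℓ²` by Bessel's inequality, while `(P_n(i)) ∈ ℓ²` by indeterminacy. Both `p_n = P_n(i)`
and `q_n` solve the three-term recurrence at `i` (`q_n` only from `n = 1` on), with Wronskian `-1`,
so variation of constants expresses `P_n(z)` through `p_n`, `q_n` and the `P_m(z)`, `m < n`.
A discrete Grönwall argument turns this into `|P_n(z)| ≤ h_n exp(|z - i| ‖h‖²)` with
`h_n = |p_n| + |q_n| ∈ ℓ²`, and Cauchy's estimate into `|b_{j,n}| R^j ≤ C_R h_n` for every `R`.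
Hence `∑_{j,k,n} b_{j,n} b_{k,n} z^j w^k` converges absolutely, and summing it first over `n` or
first over `(j, k)` gives the two sides of the claim.
-/

open MeasureTheory Polynomial Finset

namespace Polynomial

theorem iteratedDeriv_aeval {𝕜 : Type*} [NontriviallyNormedField 𝕜] {R : Type*} [CommSemiring R]
    [Algebra R 𝕜] (p : R[X]) (k : ℕ) :
    iteratedDeriv k (fun z : 𝕜 => aeval z p) = fun z => aeval z (derivative^[k] p) := by
  induction k with
  | zero => simp
  | succ k ih =>
    ext z
    rw [iteratedDeriv_succ, ih, Polynomial.deriv_aeval, Function.iterate_succ_apply']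

theorem abs_coeff_mul_pow_le_of_forall_norm_aeval_le (p : ℝ[X]) {R M : ℝ} (hR : 0 < R)
    (hM : ∀ z : ℂ, ‖z‖ = R → ‖aeval z p‖ ≤ M) (j : ℕ) : |p.coeff j| * R ^ j ≤ M := by
  have hcauchy := Complex.norm_iteratedDeriv_le_of_forall_mem_sphere_norm_le j hR
    (Polynomial.differentiable_aeval p).diffContOnCl (c := 0)
    (fun z hz => hM z (by simpa using hz))
  have hderiv : iteratedDeriv j (fun z : ℂ => aeval z p) 0 = (j.factorial : ℂ) * p.coeff j := by
    rw [iteratedDeriv_aeval]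
    dsimp only
    rw [← coeff_zero_eq_aeval_zero', coeff_iterate_derivative]
    simp [Nat.descFactorial_self]
  rw [hderiv, norm_mul, Complex.norm_natCast, Complex.norm_real, Real.norm_eq_abs,
    le_div_iff₀ (by positivity), mul_assoc] at hcauchy
  exact le_of_mul_le_mul_left hcauchy (by positivity)

theorem summable_norm_coeff_mul_pow (p : ℝ[X]) (z : ℂ) :
    Summable fun j => ‖(p.coeff j : ℂ) * z ^ j‖ :=
  summable_of_ne_finset_zero (s := range (p.natDegree + 1)) fun j hj => by
    rw [coeff_eq_zero_of_natDegree_lt (by simpa using hj)]; simp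

theorem hasSum_coeff_mul_pow (p : ℝ[X]) (z : ℂ) :
    HasSum (fun j => (p.coeff j : ℂ) * z ^ j) (aeval z p) := by
  rw [aeval_eq_sum_range]
  simp only [Complex.real_smul]
  exact hasSum_sum_of_ne_finset_zero fun j hj => by
    rw [coeff_eq_zero_of_natDegree_lt (by simpa using hj)]; simp

theorem hasSum_coeff_mul_coeff_mul_pow (p : ℝ[X]) (z w : ℂ) :
    HasSum (fun jk : ℕ × ℕ => ((p.coeff jk.1 * p.coeff jk.2 : ℝ) : ℂ) * z ^ jk.1 * w ^ jk.2)
      (aeval z p * aeval w p) := by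
  have := (p.hasSum_coeff_mul_pow z).mul (p.hasSum_coeff_mul_pow w)
    (summable_mul_of_summable_norm (f := fun j => (p.coeff j : ℂ) * z ^ j)
      (g := fun k => (p.coeff k : ℂ) * w ^ k) (p.summable_norm_coeff_mul_pow z)
      (p.summable_norm_coeff_mul_pow w))
  have hfun : (fun jk : ℕ × ℕ => ((p.coeff jk.1 * p.coeff jk.2 : ℝ) : ℂ) * z ^ jk.1 * w ^ jk.2)
      = fun jk => (p.coeff jk.1 : ℂ) * z ^ jk.1 * ((p.coeff jk.2 : ℂ) * w ^ jk.2) := by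
    ext jk; push_cast; ring
  rw [hfun]
  exact this

end Polynomial

theorem le_mul_exp_of_le_mul_one_add_sum {h t : ℕ → ℝ} {c : ℝ} (hc : 0 ≤ c)
    (hh : ∀ n, 0 ≤ h n) (ht : ∀ n, 0 ≤ t n)
    (hrec : ∀ n, t n ≤ h n * (1 + c * ∑ m ∈ range n, h m * t m)) (n : ℕ) :
    t n ≤ h n * Real.exp (c * ∑ m ∈ range n, h m ^ 2) := by
  suffices key : ∀ n, 1 + c * ∑ m ∈ range n, h m * t m ≤ Real.exp (c * ∑ m ∈ range n, h m ^ 2) from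
    (hrec n).trans (mul_le_mul_of_nonneg_left (key n) (hh n))
  intro n
  induction n with
  | zero => simp
  | succ n ih =>
    have hS : 0 ≤ 1 + c * ∑ m ∈ range n, h m * t m := by
      have := sum_nonneg fun m (_ : m ∈ range n) => mul_nonneg (hh m) (ht m)
      positivity
    have hstep : c * (h n * t n) ≤ (1 + c * ∑ m ∈ range n, h m * t m) * (c * h n ^ 2) := by
      have := mul_le_mul_of_nonneg_left (hrec n) (mul_nonneg hc (hh n))
      linarith
    calc 1 + c * ∑ m ∈ range (n + 1), h m * t m
        ≤ (1 + c * ∑ m ∈ range n, h m * t m) * (1 + c * h n ^ 2) := by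
          rw [sum_range_succ]; linarith
      _ ≤ Real.exp (c * ∑ m ∈ range n, h m ^ 2) * Real.exp (c * h n ^ 2) := by
          gcongr
          linarith [Real.add_one_le_exp (c * h n ^ 2)]
      _ = Real.exp (c * ∑ m ∈ range (n + 1), h m ^ 2) := by
          rw [← Real.exp_add, sum_range_succ, mul_add]

/-- The Jacobi recurrence `a n * y (n + 1) + b n * y n + a (n - 1) * y (n - 1) = z * y n`, for
`n ≥ 1` only: the row `n = 0` is imposed separately where it is needed. -/
def JacobiRecurrence {R : Type*} [CommRing R] (a b : ℕ → R) (z : R) (y : ℕ → R) : Prop :=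
  ∀ n, a (n + 1) * y (n + 2) + b (n + 1) * y (n + 1) + a n * y n = z * y (n + 1)

namespace JacobiRecurrence

section CommRing

variable {R : Type*} [CommRing R] {a b p q y : ℕ → R} {w z : R}

theorem wronskian_eq (hp : JacobiRecurrence a b w p) (hq : JacobiRecurrence a b w q) (n : ℕ) :
    a n * (p (n + 1) * q n - p n * q (n + 1)) = a 0 * (p 1 * q 0 - p 0 * q 1) := by
  induction n with
  | zero => rfl
  | succ n ih => linear_combination q (n + 1) * hp n - p (n + 1) * hq n + ih

theorem eq_variation_of_constants [IsDomain R] (ha : ∀ n, a n ≠ 0)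
    (hp₀ : a 0 * p 1 + b 0 * p 0 = w * p 0) (hp : JacobiRecurrence a b w p)
    (hq : JacobiRecurrence a b w q) (hW : a 0 * (p 1 * q 0 - p 0 * q 1) = -1)
    (hy₀ : a 0 * y 1 + b 0 * y 0 = z * y 0) (hy : JacobiRecurrence a b z y) (hyp : y 0 = p 0)
    (n : ℕ) :
    y n = p n * (1 - (z - w) * ∑ m ∈ range n, q m * y m)
      + q n * ((z - w) * ∑ m ∈ range n, p m * y m) := by
  suffices ∀ S T : ℕ → R, S 0 = 1 → T 0 = 0 →
      (∀ n, S (n + 1) = S n - (z - w) * (q n * y n)) →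
      (∀ n, T (n + 1) = T n + (z - w) * (p n * y n)) → ∀ n, y n = p n * S n + q n * T n from
    this (fun n => 1 - (z - w) * ∑ m ∈ range n, q m * y m)
      (fun n => (z - w) * ∑ m ∈ range n, p m * y m) (by simp) (by simp)
      (fun n => by simp only [sum_range_succ]; ring)
      (fun n => by simp only [sum_range_succ]; ring) n
  intro S T hS₀ hT₀ hS hT
  suffices ∀ n, y n = p n * S n + q n * T n ∧
      y (n + 1) = p (n + 1) * S (n + 1) + q (n + 1) * T (n + 1) from fun n => (this n).1
  intro n
  induction n with
  | zero =>
    refine ⟨by rw [hS₀, hT₀, hyp]; ring, mul_left_cancel₀ (ha 0) ?_⟩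
    rw [hS, hT, hS₀, hT₀]
    linear_combination hy₀ + (z - w) * y 0 * hW - hp₀ + (w - b 0) * hyp
  | succ n ih =>
    obtain ⟨ihn, ihn1⟩ := ih
    refine ⟨ihn1, mul_left_cancel₀ (ha (n + 1)) ?_⟩
    have k₁ : p (n + 1) * S (n + 2) + q (n + 1) * T (n + 2) = y (n + 1) := by
      rw [hS, hT]; linear_combination -ihn1
    have k₂ : p n * S (n + 2) + q n * T (n + 2)
        = y n + (z - w) * y (n + 1) * (p (n + 1) * q n - p n * q (n + 1)) := by
      rw [hS, hT, hS, hT]; linear_combination -ihn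
    linear_combination hy n - S (n + 2) * hp n - T (n + 2) * hq n - (w - b (n + 1)) * k₁
      + a n * k₂ + (z - w) * y (n + 1) * ((wronskian_eq hp hq n).trans hW)

end CommRing

variable {K : Type*} [NormedField K] {a b p q y : ℕ → K} {w z : K}

theorem norm_le_mul_exp (ha : ∀ n, a n ≠ 0)
    (hp₀ : a 0 * p 1 + b 0 * p 0 = w * p 0) (hp : JacobiRecurrence a b w p)
    (hq : JacobiRecurrence a b w q) (hW : a 0 * (p 1 * q 0 - p 0 * q 1) = -1)
    (hy₀ : a 0 * y 1 + b 0 * y 0 = z * y 0) (hy : JacobiRecurrence a b z y) (hyp : y 0 = p 0)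
    (n : ℕ) :
    ‖y n‖ ≤ (‖p n‖ + ‖q n‖) * Real.exp (‖z - w‖ * ∑ m ∈ range n, (‖p m‖ + ‖q m‖) ^ 2) := by
  refine le_mul_exp_of_le_mul_one_add_sum (h := fun m => ‖p m‖ + ‖q m‖) (t := fun m => ‖y m‖)
    (norm_nonneg _) (fun _ => by positivity) (fun _ => norm_nonneg _) (fun n => ?_) n
  set σ := ∑ m ∈ range n, (‖p m‖ + ‖q m‖) * ‖y m‖
  have hσ : 0 ≤ σ := sum_nonneg fun m _ => by positivity
  have hsum : ∀ r : ℕ → K, (∀ m, ‖r m‖ ≤ ‖p m‖ + ‖q m‖) → ‖∑ m ∈ range n, r m * y m‖ ≤ σ :=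
    fun r hr => (norm_sum_le _ _).trans <| sum_le_sum fun m _ => by
      rw [norm_mul]; exact mul_le_mul_of_nonneg_right (hr m) (norm_nonneg _)
  have hqσ := hsum q fun m => le_add_of_nonneg_left (norm_nonneg _)
  have hpσ := hsum p fun m => le_add_of_nonneg_right (norm_nonneg _)
  rw [eq_variation_of_constants ha hp₀ hp hq hW hy₀ hy hyp n]
  calc _ ≤ ‖p n‖ * (1 + ‖z - w‖ * σ) + ‖q n‖ * (‖z - w‖ * σ) := by
        refine (norm_add_le _ _).trans (add_le_add ?_ ?_) <;> rw [norm_mul]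
        · refine mul_le_mul_of_nonneg_left ((norm_sub_le _ _).trans ?_) (norm_nonneg _)
          rw [norm_one, norm_mul]
          gcongr
        · rw [norm_mul]
          gcongr
    _ ≤ (‖p n‖ + ‖q n‖) * (1 + ‖z - w‖ * σ) := by nlinarith [norm_nonneg (q n), norm_nonneg (z - w)]

end JacobiRecurrence

section CoeffBound

variable {P : ℕ → ℝ[X]} {h : ℕ → ℝ}

theorem summable_abs_coeff_mul_coeff (hh : Summable fun n => h n ^ 2)
    (hb : ∀ R > 0, ∃ C, ∀ j n, |(P n).coeff j| * R ^ j ≤ C * h n) (j k : ℕ) :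
    Summable fun n => |(P n).coeff j * (P n).coeff k| := by
  obtain ⟨C, hC⟩ := hb 1 one_pos
  refine (hh.mul_left (C ^ 2)).of_nonneg_of_le (fun n => abs_nonneg _) fun n => ?_
  have hj := hC j n
  have hk := hC k n
  rw [one_pow, mul_one] at hj hk
  rw [abs_mul]
  nlinarith [abs_nonneg ((P n).coeff j), abs_nonneg ((P n).coeff k)]

theorem summable_norm_coeff_mul_coeff_mul_pow (hh : Summable fun n => h n ^ 2)
    (hb : ∀ R > 0, ∃ C, ∀ j n, |(P n).coeff j| * R ^ j ≤ C * h n) (z w : ℂ) :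
    Summable fun x : (ℕ × ℕ) × ℕ =>
      ‖((P x.2).coeff x.1.1 * (P x.2).coeff x.1.2 : ℂ) * z ^ x.1.1 * w ^ x.1.2‖ := by
  set R := ‖z‖ + ‖w‖ + 1
  have hR : 0 < R := by positivity
  obtain ⟨C, hC⟩ := hb R hR
  have hscale : ∀ (t : ℝ), 0 ≤ t → ∀ j n, |(P n).coeff j| * t ^ j ≤ C * h n * (t / R) ^ j :=
    fun t ht j n => by
      rw [div_pow, ← mul_div_assoc, le_div_iff₀ (by positivity), mul_assoc, mul_comm (t ^ j),
        ← mul_assoc]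
      exact mul_le_mul_of_nonneg_right (hC j n) (by positivity)
  have hgeom : ∀ t, 0 ≤ t → t < R → Summable fun j : ℕ => (t / R) ^ j := fun t ht htR =>
    summable_geometric_of_lt_one (by positivity) ((div_lt_one hR).mpr htR)
  refine Summable.of_nonneg_of_le (fun _ => norm_nonneg _) (fun x => ?_)
    (((hgeom _ (norm_nonneg z) (by linarith [norm_nonneg w])).mul_of_nonneg
      (hgeom _ (norm_nonneg w) (by linarith [norm_nonneg z])) (fun _ => by positivity)
      (fun _ => by positivity)).mul_of_nonneg (hh.mul_left (C ^ 2)) (fun _ => by positivity)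
      (fun _ => by positivity))
  obtain ⟨⟨j, k⟩, n⟩ := x
  have hz := hscale _ (norm_nonneg z) j n
  have hw := hscale _ (norm_nonneg w) k n
  simp only [norm_mul, norm_pow, Complex.norm_real, Real.norm_eq_abs]
  calc |(P n).coeff j| * |(P n).coeff k| * ‖z‖ ^ j * ‖w‖ ^ k
      = (|(P n).coeff j| * ‖z‖ ^ j) * (|(P n).coeff k| * ‖w‖ ^ k) := by ring
    _ ≤ (C * h n * (‖z‖ / R) ^ j) * (C * h n * (‖w‖ / R) ^ k) :=
        mul_le_mul hz hw (by positivity) ((by positivity : (0 : ℝ) ≤ _).trans hz)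
    _ = (‖z‖ / R) ^ j * (‖w‖ / R) ^ k * (C ^ 2 * h n ^ 2) := by ring

theorem hasSum_tsum_coeff_mul_coeff_mul_pow (hh : Summable fun n => h n ^ 2)
    (hb : ∀ R > 0, ∃ C, ∀ j n, |(P n).coeff j| * R ^ j ≤ C * h n) (z w : ℂ) :
    HasSum (fun jk : ℕ × ℕ =>
        ((∑' n, (P n).coeff jk.1 * (P n).coeff jk.2 : ℝ) : ℂ) * z ^ jk.1 * w ^ jk.2)
      (∑' n, aeval z (P n) * aeval w (P n)) := by
  set F : (ℕ × ℕ) × ℕ → ℂ := fun x =>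
    ((P x.2).coeff x.1.1 * (P x.2).coeff x.1.2 : ℂ) * z ^ x.1.1 * w ^ x.1.2
  have hF : HasSum F (∑' x, F x) :=
    (summable_norm_coeff_mul_coeff_mul_pow hh hb z w).of_norm.hasSum
  have hcol : ∀ jk : ℕ × ℕ, HasSum (fun n => F (jk, n))
      (((∑' n, (P n).coeff jk.1 * (P n).coeff jk.2 : ℝ) : ℂ) * z ^ jk.1 * w ^ jk.2) := by
    rintro ⟨j, k⟩
    have := (Complex.ofRealCLM.hasSum
      (summable_abs_coeff_mul_coeff hh hb j k).of_abs.hasSum).mul_right (z ^ j * w ^ k)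
    simpa [F, mul_assoc] using this
  have hrow : HasSum (fun n => aeval z (P n) * aeval w (P n)) (∑' x, F x) :=
    ((Equiv.prodComm _ _).hasSum_iff.mpr hF).prod_fiberwise fun n => by
      simpa [F] using (P n).hasSum_coeff_mul_coeff_mul_pow z w
  rw [hrow.tsum_eq]
  exact hF.prod_fiberwise hcol

end CoeffBound

section WeightedIntegral

variable {E : Type*} [NormedAddCommGroup E] [NormedSpace ℝ E]

noncomputable def weightedIntegral (μ : Measure ℝ) (u : ℝ → E)
    (hu : ∀ p : ℝ[X], Integrable (fun x => p.eval x • u x) μ) : ℝ[X] →ₗ[ℝ] E where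
  toFun p := ∫ x, p.eval x • u x ∂μ
  map_add' p q := by simp only [eval_add, add_smul]; exact integral_add (hu p) (hu q)
  map_smul' c p := by
    simp only [eval_smul, smul_eq_mul, mul_smul, RingHom.id_apply]; exact integral_smul c _

theorem weightedIntegral_apply (μ : Measure ℝ) (u : ℝ → E)
    (hu : ∀ p : ℝ[X], Integrable (fun x => p.eval x • u x) μ) (p : ℝ[X]) :
    weightedIntegral μ u hu p = ∫ x, p.eval x • u x ∂μ := rfl

end WeightedIntegral

noncomputable def jacobiA (μ : Measure ℝ) (P : ℕ → ℝ[X]) (n : ℕ) : ℝ :=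
  ∫ x, x * (P n).eval x * (P (n + 1)).eval x ∂μ

noncomputable def jacobiB (μ : Measure ℝ) (P : ℕ → ℝ[X]) (n : ℕ) : ℝ :=
  ∫ x, x * (P n).eval x * (P n).eval x ∂μ

noncomputable def secondKind (μ : Measure ℝ) (P : ℕ → ℝ[X]) (w : ℂ) (n : ℕ) : ℂ :=
  ∫ x, (P n).eval x • ((x : ℂ) - w)⁻¹ ∂μ

theorem norm_inv_ofReal_sub_le {w : ℂ} (hw : w.im ≠ 0) (x : ℝ) :
    ‖((x : ℂ) - w)⁻¹‖ ≤ |w.im|⁻¹ := by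
  rw [norm_inv]
  refine inv_anti₀ (abs_pos.mpr hw) ((le_of_eq ?_).trans (Complex.abs_im_le_norm _))
  simp

theorem measurable_inv_ofReal_sub (w : ℂ) : Measurable fun x : ℝ => ((x : ℂ) - w)⁻¹ := by
  fun_prop

structure HasFiniteMoments (μ : Measure ℝ) : Prop where
  integrable_pow : ∀ n : ℕ, Integrable (fun x => x ^ n) μ

namespace HasFiniteMoments

variable {μ : Measure ℝ}

theorem integrable_eval (hμ : HasFiniteMoments μ) (p : ℝ[X]) :
    Integrable (fun x => p.eval x) μ := by
  simp_rw [eval_eq_sum_range]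
  exact integrable_finsetSum _ fun i _ => (hμ.integrable_pow i).const_mul _

theorem integrable_eval_smul {E : Type*} [NormedAddCommGroup E] [NormedSpace ℝ E]
    (hμ : HasFiniteMoments μ) {u : ℝ → E} (hu : AEStronglyMeasurable u μ) {C : ℝ}
    (hC : ∀ x, ‖u x‖ ≤ C) (p : ℝ[X]) : Integrable (fun x => p.eval x • u x) μ :=
  (hμ.integrable_eval p).smul_bdd C hu (ae_of_all _ hC)

theorem isFiniteMeasure (hμ : HasFiniteMoments μ) : IsFiniteMeasure μ :=
  (integrable_const_iff.mp (by simpa using hμ.integrable_pow 0)).resolve_left one_ne_zero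

theorem memLp_two_eval (hμ : HasFiniteMoments μ) (p : ℝ[X]) :
    MemLp (fun x : ℝ => ((p.eval x : ℝ) : ℂ)) 2 μ := by
  refine (memLp_two_iff_integrable_sq_norm (by fun_prop)).mpr ?_
  have h := hμ.integrable_eval (p ^ 2)
  simp only [Polynomial.eval_pow] at h
  simpa [sq_abs] using h

noncomputable def integralₗ (hμ : HasFiniteMoments μ) : ℝ[X] →ₗ[ℝ] ℝ :=
  weightedIntegral μ (fun _ => 1) (hμ.integrable_eval_smul aestronglyMeasurable_const
    (fun _ => (norm_one (α := ℝ)).le))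

theorem integralₗ_apply (hμ : HasFiniteMoments μ) (p : ℝ[X]) :
    hμ.integralₗ p = ∫ x, p.eval x ∂μ := by
  simp [integralₗ, weightedIntegral_apply]

noncomputable def cauchyTransformₗ (hμ : HasFiniteMoments μ) {w : ℂ} (hw : w.im ≠ 0) :
    ℝ[X] →ₗ[ℝ] ℂ :=
  weightedIntegral μ _ (hμ.integrable_eval_smul
    (measurable_inv_ofReal_sub w).aestronglyMeasurable (norm_inv_ofReal_sub_le hw))

theorem cauchyTransformₗ_apply (hμ : HasFiniteMoments μ) {w : ℂ} (hw : w.im ≠ 0)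
    (P : ℕ → ℝ[X]) (n : ℕ) : hμ.cauchyTransformₗ hw (P n) = secondKind μ P w n := rfl

theorem cauchyTransformₗ_X_mul (hμ : HasFiniteMoments μ) {w : ℂ} (hw : w.im ≠ 0) (p : ℝ[X]) :
    hμ.cauchyTransformₗ hw (X * p) = hμ.integralₗ p + w * hμ.cauchyTransformₗ hw p := by
  have hint := hμ.integrable_eval_smul (measurable_inv_ofReal_sub w).aestronglyMeasurable
    (norm_inv_ofReal_sub_le hw) p
  simp only [cauchyTransformₗ, weightedIntegral_apply, integralₗ_apply]
  rw [← integral_complex_ofReal, ← integral_const_mul,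
    ← integral_add (by exact (hμ.integrable_eval p).ofReal) (hint.const_mul w)]
  refine integral_congr_ae (ae_of_all _ fun x => ?_)
  have hx : (x : ℂ) - w ≠ 0 := fun h => hw (by simpa using congrArg Complex.im h)
  simp only [eval_mul, eval_X, Complex.real_smul]
  push_cast
  field_simp
  ring

end HasFiniteMoments

structure IsOrthonormalPolySeq (μ : Measure ℝ) (P : ℕ → ℝ[X]) : Prop
    extends HasFiniteMoments μ where
  natDegree_eq : ∀ n, (P n).natDegree = n
  leadingCoeff_pos : ∀ n, 0 < (P n).leadingCoeff
  integral_eval_mul_eval : ∀ n m, ∫ x, (P n).eval x * (P m).eval x ∂μ = if n = m then 1 else 0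

namespace IsOrthonormalPolySeq

variable {μ : Measure ℝ} {P : ℕ → ℝ[X]}

theorem integralₗ_mul (hP : IsOrthonormalPolySeq μ P) (n m : ℕ) :
    hP.integralₗ (P n * P m) = if n = m then 1 else 0 := by
  rw [HasFiniteMoments.integralₗ_apply, ← hP.integral_eval_mul_eval]; simp only [eval_mul]

def toSequence (hP : IsOrthonormalPolySeq μ P) : Polynomial.Sequence ℝ where
  elems' := P
  degree_eq' n := by
    rw [degree_eq_natDegree (leadingCoeff_ne_zero.mp (hP.leadingCoeff_pos n).ne'),
      hP.natDegree_eq]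

theorem integralₗ_mul_eq_zero_of_natDegree_lt (hP : IsOrthonormalPolySeq μ P) {p : ℝ[X]} {n : ℕ}
    (hp : p.natDegree < n) : hP.integralₗ (p * P n) = 0 := by
  have hspan : p ∈ Submodule.span ℝ (P '' Set.Iio n) := by
    rw [show P = ⇑hP.toSequence from rfl, hP.toSequence.span_degreeLT
      (fun i _ => (hP.leadingCoeff_pos i).ne'.isUnit), mem_degreeLT]
    exact (degree_le_natDegree).trans_lt (by exact_mod_cast hp)
  have hle : Submodule.span ℝ (P '' Set.Iio n)
      ≤ LinearMap.ker (hP.integralₗ ∘ₗ LinearMap.mulRight ℝ (P n)) := by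
    rw [Submodule.span_le]
    rintro _ ⟨m, hm, rfl⟩
    simp [hP.integralₗ_mul, (Set.mem_Iio.mp hm).ne]
  simpa using hle hspan

theorem eq_sum_integralₗ_smul (hP : IsOrthonormalPolySeq μ P) {p : ℝ[X]} {N : ℕ}
    (hp : p.natDegree ≤ N) :
    p = ∑ m ∈ range (N + 1), hP.integralₗ (p * P m) • P m := by
  have hspan : p ∈ Submodule.span ℝ (P '' Set.Iic N) := by
    rw [show P = ⇑hP.toSequence from rfl, hP.toSequence.span_degreeLE
      (fun i _ => (hP.leadingCoeff_pos i).ne'.isUnit), mem_degreeLE]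
    exact (degree_le_natDegree).trans (by exact_mod_cast hp)
  have hgen : Set.EqOn (LinearMap.id : ℝ[X] →ₗ[ℝ] ℝ[X])
      ⇑(∑ m ∈ range (N + 1), (hP.integralₗ ∘ₗ LinearMap.mulRight ℝ (P m)).smulRight (P m))
      (P '' Set.Iic N) := by
    rintro _ ⟨k, hk, rfl⟩
    simp [hP.integralₗ_mul, Set.mem_Iic.mp hk]
  simpa using LinearMap.eqOn_span hgen hspan

theorem integralₗ_X_mul_mul (hP : IsOrthonormalPolySeq μ P) (n m : ℕ) :
    hP.integralₗ (X * P n * P m) = ∫ x, x * (P n).eval x * (P m).eval x ∂μ := by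
  rw [HasFiniteMoments.integralₗ_apply]; simp only [eval_mul, eval_X]

theorem natDegree_X_mul_le (hP : IsOrthonormalPolySeq μ P) (n : ℕ) :
    (X * P n).natDegree ≤ n + 1 :=
  natDegree_mul_le.trans (by rw [natDegree_X, hP.natDegree_eq, add_comm])

theorem X_mul_zero (hP : IsOrthonormalPolySeq μ P) :
    X * P 0 = jacobiA μ P 0 • P 1 + jacobiB μ P 0 • P 0 := by
  conv_lhs => rw [hP.eq_sum_integralₗ_smul (hP.natDegree_X_mul_le 0)]
  rw [sum_range_succ, sum_range_one, hP.integralₗ_X_mul_mul, hP.integralₗ_X_mul_mul, add_comm]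
  rfl

theorem X_mul_succ (hP : IsOrthonormalPolySeq μ P) (n : ℕ) :
    X * P (n + 1) = jacobiA μ P (n + 1) • P (n + 2) + jacobiB μ P (n + 1) • P (n + 1)
      + jacobiA μ P n • P n := by
  conv_lhs => rw [hP.eq_sum_integralₗ_smul (hP.natDegree_X_mul_le (n + 1))]
  have hlow : ∀ m ∈ range n, hP.integralₗ (X * P (n + 1) * P m) • P m = 0 := fun m hm => by
    rw [show X * P (n + 1) * P m = X * P m * P (n + 1) by ring,
      hP.integralₗ_mul_eq_zero_of_natDegree_lt
        ((hP.natDegree_X_mul_le m).trans_lt (by simpa using mem_range.mp hm)), zero_smul]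
  rw [sum_range_succ, sum_range_succ, sum_range_succ, sum_eq_zero hlow, zero_add,
    hP.integralₗ_X_mul_mul, hP.integralₗ_X_mul_mul, hP.integralₗ_X_mul_mul]
  simp only [jacobiA, jacobiB, mul_right_comm _ (eval _ (P (n + 1)))]
  abel

theorem jacobiA_ne_zero (hP : IsOrthonormalPolySeq μ P) (n : ℕ) : jacobiA μ P n ≠ 0 := by
  have hcoeff : ∀ k m, k < m → (P k).coeff m = 0 := fun k m h =>
    coeff_eq_zero_of_natDegree_lt (by rwa [hP.natDegree_eq])
  have hlead : ∀ k, (P k).coeff k = (P k).leadingCoeff := fun k => by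
    rw [leadingCoeff, hP.natDegree_eq]
  have hX : (X * P n).coeff (n + 1) = jacobiA μ P n * (P (n + 1)).leadingCoeff := by
    cases n with
    | zero => simp [hP.X_mul_zero, hcoeff, hlead]
    | succ n => simp [hP.X_mul_succ, hcoeff, hlead]
  rw [coeff_X_mul, hlead] at hX
  intro h
  exact (hP.leadingCoeff_pos n).ne' (by simpa [h] using hX)

theorem aeval_X_mul_zero (hP : IsOrthonormalPolySeq μ P) (z : ℂ) :
    (jacobiA μ P 0 : ℂ) * aeval z (P 1) + jacobiB μ P 0 * aeval z (P 0) = z * aeval z (P 0) := by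
  have := congrArg (aeval z) hP.X_mul_zero
  simp only [map_add, map_mul, map_smul, aeval_X, Complex.real_smul] at this
  exact this.symm

theorem jacobiRecurrence_aeval (hP : IsOrthonormalPolySeq μ P) (z : ℂ) :
    JacobiRecurrence (fun n => (jacobiA μ P n : ℂ)) (fun n => (jacobiB μ P n : ℂ)) z
      (fun n => aeval z (P n)) := fun n => by
  have := congrArg (aeval z) (hP.X_mul_succ n)
  simp only [map_add, map_mul, map_smul, aeval_X, Complex.real_smul] at this
  exact this.symm

theorem jacobiRecurrence_secondKind (hP : IsOrthonormalPolySeq μ P) {w : ℂ} (hw : w.im ≠ 0) :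
    JacobiRecurrence (fun n => (jacobiA μ P n : ℂ)) (fun n => (jacobiB μ P n : ℂ)) w
      (secondKind μ P w) :=
  fun n => by
  have := congrArg (hP.cauchyTransformₗ hw) (hP.X_mul_succ n)
  have hzero : hP.integralₗ (P (n + 1)) = 0 := by
    simpa using hP.integralₗ_mul_eq_zero_of_natDegree_lt (p := 1) (n := n + 1) (by simp)
  simp only [HasFiniteMoments.cauchyTransformₗ_X_mul, HasFiniteMoments.cauchyTransformₗ_apply,
    map_add, map_smul, hzero, Complex.real_smul, Complex.ofReal_zero] at this
  linear_combination -this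

theorem aeval_mul_integralₗ_zero (hP : IsOrthonormalPolySeq μ P) (z : ℂ) :
    aeval z (P 0) * hP.integralₗ (P 0) = 1 := by
  have hC := eq_C_of_natDegree_eq_zero (hP.natDegree_eq 0)
  have h := hP.integralₗ_mul 0 0
  nth_rewrite 1 [hC] at h
  rw [C_mul', map_smul, if_pos rfl, smul_eq_mul] at h
  rw [hC, aeval_C, Complex.coe_algebraMap, ← hC]
  exact_mod_cast h

theorem wronskian_secondKind (hP : IsOrthonormalPolySeq μ P) {w : ℂ} (hw : w.im ≠ 0) :
    (jacobiA μ P 0 : ℂ) * (aeval w (P 1) * secondKind μ P w 0 - aeval w (P 0) * secondKind μ P w 1)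
      = -1 := by
  have h₁ := hP.aeval_X_mul_zero w
  have h₂ := congrArg (hP.cauchyTransformₗ hw) hP.X_mul_zero
  simp only [HasFiniteMoments.cauchyTransformₗ_X_mul, HasFiniteMoments.cauchyTransformₗ_apply,
    map_add, map_smul, Complex.real_smul] at h₂
  linear_combination secondKind μ P w 0 * h₁ + aeval w (P 0) * h₂ - hP.aeval_mul_integralₗ_zero w

theorem orthonormal_toLp (hP : IsOrthonormalPolySeq μ P) :
    Orthonormal ℂ fun n => (hP.memLp_two_eval (P n)).toLp := by
  rw [orthonormal_iff_ite]
  intro n m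
  rw [L2.inner_def, integral_congr_ae (((hP.memLp_two_eval (P n)).coeFn_toLp).mp
    (((hP.memLp_two_eval (P m)).coeFn_toLp).mono fun x hm hn => by rw [hn, hm]))]
  simp only [RCLike.inner_apply', Complex.conj_ofReal, ← Complex.ofReal_mul,
    integral_complex_ofReal, hP.integral_eval_mul_eval]
  split_ifs <;> simp

theorem summable_sq_norm_secondKind (hP : IsOrthonormalPolySeq μ P) {w : ℂ} (hw : w.im ≠ 0) :
    Summable fun n => ‖secondKind μ P w n‖ ^ 2 := by
  have := hP.isFiniteMeasure
  have hu : MemLp (fun x : ℝ => ((x : ℂ) - w)⁻¹) 2 μ :=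
    MemLp.of_bound (measurable_inv_ofReal_sub w).aestronglyMeasurable _
      (ae_of_all _ (norm_inv_ofReal_sub_le hw))
  refine (hP.orthonormal_toLp.inner_products_summable hu.toLp).congr fun n => ?_
  rw [L2.inner_def, integral_congr_ae (((hP.memLp_two_eval (P n)).coeFn_toLp).mp
    (hu.coeFn_toLp.mono fun x hu hp => by rw [hu, hp]))]
  simp only [RCLike.inner_apply', Complex.conj_ofReal, secondKind, Complex.real_smul]

theorem aeval_zero_eq (hP : IsOrthonormalPolySeq μ P) (z w : ℂ) :
    aeval z (P 0) = aeval w (P 0) := by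
  rw [eq_C_of_natDegree_eq_zero (hP.natDegree_eq 0), aeval_C, aeval_C]

theorem norm_aeval_le (hP : IsOrthonormalPolySeq μ P) {w : ℂ} (hw : w.im ≠ 0) (z : ℂ) (n : ℕ) :
    ‖aeval z (P n)‖ ≤ (‖aeval w (P n)‖ + ‖secondKind μ P w n‖) * Real.exp (‖z - w‖ *
      ∑ m ∈ range n, (‖aeval w (P m)‖ + ‖secondKind μ P w m‖) ^ 2) :=
  JacobiRecurrence.norm_le_mul_exp (fun n => Complex.ofReal_ne_zero.mpr (hP.jacobiA_ne_zero n))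
    (hP.aeval_X_mul_zero w) (hP.jacobiRecurrence_aeval w) (hP.jacobiRecurrence_secondKind hw)
    (hP.wronskian_secondKind hw) (hP.aeval_X_mul_zero z) (hP.jacobiRecurrence_aeval z)
    (hP.aeval_zero_eq z w) n

theorem summable_sq_norm_aeval_add_norm_secondKind (hP : IsOrthonormalPolySeq μ P) {w : ℂ}
    (hw : w.im ≠ 0) (hsum : Summable fun n => ‖aeval w (P n)‖ ^ 2) :
    Summable fun n => (‖aeval w (P n)‖ + ‖secondKind μ P w n‖) ^ 2 :=
  ((hsum.add (hP.summable_sq_norm_secondKind hw)).mul_left 2).of_nonneg_of_le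
    (fun _ => sq_nonneg _) fun n => by
      nlinarith [sq_nonneg (‖aeval w (P n)‖ - ‖secondKind μ P w n‖)]

theorem abs_coeff_mul_pow_le (hP : IsOrthonormalPolySeq μ P) {w : ℂ} (hw : w.im ≠ 0)
    (hsum : Summable fun n => ‖aeval w (P n)‖ ^ 2) {R : ℝ} (hR : 0 < R) (j n : ℕ) :
    |(P n).coeff j| * R ^ j ≤ Real.exp ((R + ‖w‖) *
      ∑' m, (‖aeval w (P m)‖ + ‖secondKind μ P w m‖) ^ 2) *
        (‖aeval w (P n)‖ + ‖secondKind μ P w n‖) := by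
  refine abs_coeff_mul_pow_le_of_forall_norm_aeval_le _ hR (fun z hz => ?_) j
  refine (hP.norm_aeval_le hw z n).trans ?_
  rw [mul_comm]
  gcongr
  · exact (norm_sub_le z w).trans (by rw [hz])
  · exact Summable.sum_le_tsum _ (fun _ _ => sq_nonneg _)
      (hP.summable_sq_norm_aeval_add_norm_secondKind hw hsum)

end IsOrthonormalPolySeq

theorem kernel_coefficients_eq_BBstar_general
    (μ : Measure ℝ)
    (hmom : ∀ n : ℕ, Integrable (fun x => x ^ n) μ)
    (P : ℕ → Polynomial ℝ)
    (hdeg : ∀ n, (P n).natDegree = n)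
    (hlead : ∀ n, 0 < (P n).leadingCoeff)
    (horth : ∀ n m, ∫ x, (P n).eval x * (P m).eval x ∂μ = if n = m then 1 else 0)
    (hindet : ∀ z : ℂ, Summable fun n => ‖Polynomial.aeval z (P n)‖ ^ 2)
    (a : ℕ → ℕ → ℝ)
    (ha : ∀ j k, a j k = ∑' n : ℕ, (P n).coeff j * (P n).coeff k) :
    (∀ j k : ℕ, Summable fun n : ℕ => |(P n).coeff j * (P n).coeff k|) ∧
      ∀ z w : ℂ,
        HasSum (fun p : ℕ × ℕ => (a p.1 p.2 : ℂ) * z ^ p.1 * w ^ p.2)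
          (∑' n : ℕ, Polynomial.aeval z (P n) * Polynomial.aeval w (P n)) := by
  have hP : IsOrthonormalPolySeq μ P := ⟨⟨hmom⟩, hdeg, hlead, horth⟩
  have hI : Complex.I.im ≠ 0 := by simp
  have hsq := hP.summable_sq_norm_aeval_add_norm_secondKind hI (hindet Complex.I)
  have hbound : ∀ R > 0, ∃ C, ∀ j n, |(P n).coeff j| * R ^ j
      ≤ C * (‖aeval Complex.I (P n)‖ + ‖secondKind μ P Complex.I n‖) :=
    fun R hR => ⟨_, hP.abs_coeff_mul_pow_le hI (hindet Complex.I) hR⟩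
  simp only [ha]
  exact ⟨summable_abs_coeff_mul_coeff hsq hbound, hasSum_tsum_coeff_mul_coeff_mul_pow hsq hbound⟩

/-- In the indeterminate case, the Taylor coefficients of the kernel
`K(z,w) = ∑_n P_n(z)P_n(w)` are `a_{j,k} = ∑_n b_{j,n} b_{k,n}` (absolutely convergent),
i.e. `A = B B^*`. -/
theorem kernel_coefficients_eq_BBstar
    (μ : Measure ℝ)
    (hmom : ∀ n : ℕ, Integrable (fun x => x ^ n) μ)
    (hsupp : ∀ p : Polynomial ℝ, p ≠ 0 → 0 < ∫ x, (p.eval x) ^ 2 ∂μ)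
    (P : ℕ → Polynomial ℝ)
    (hdeg : ∀ n, (P n).natDegree = n)
    (hlead : ∀ n, 0 < (P n).leadingCoeff)
    (horth : ∀ n m, ∫ x, (P n).eval x * (P m).eval x ∂μ = if n = m then 1 else 0)
    (hindet : ∀ z : ℂ, Summable fun n => ‖Polynomial.aeval z (P n)‖ ^ 2)
    (a : ℕ → ℕ → ℝ)
    (ha : ∀ j k, a j k = ∑' n : ℕ, (P n).coeff j * (P n).coeff k) :
    (∀ j k : ℕ, Summable fun n : ℕ => |(P n).coeff j * (P n).coeff k|) ∧
      ∀ z w : ℂ,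
        HasSum (fun p : ℕ × ℕ => (a p.1 p.2 : ℂ) * z ^ p.1 * w ^ p.2)
          (∑' n : ℕ, Polynomial.aeval z (P n) * Polynomial.aeval w (P n)) :=
  kernel_coefficients_eq_BBstar_general μ hmom P hdeg hlead horth hindet a ha
end

section
/- For 0 < q < 1 let s_n = q^{−(n+1)²/2} be the Stieltjes–Wigert moments, with H_n = (s_{j+k})_{0≤j,k≤n} and D_n = det H_n. Then D_n = q^{−S_{n+1} − S_n + (n+1)/2} ∏_{j=1}^n (q;q)_j, where S_n = n(n+1)(2n+1)/6. -/
/-!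
Since `(i + j + 1)² / 2 = (i + 1)² / 2 + j (j + 2) / 2 + i j`, the Hankel matrix is the Vandermonde
matrix on the nodes `q⁻¹ ^ i`, scaled by diagonal matrices on both sides. Each Vandermonde factor
is `q^{-j} - q^{-i} = q^{-j} (1 - q^{j-i})`, so the factors with a fixed larger index `j` multiply
to `q^{-j²} (q;q)_j`. What remains is to add up the exponents of `q`.
-/

open Finset

theorem Matrix.det_of_mul_mul_pow {R : Type*} [CommRing R] {n : ℕ} (a b v : Fin n → R) :
    (Matrix.of fun i j => a i * b j * v i ^ (j : ℕ)).det =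
      (∏ i, a i) * (∏ j, b j) * (Matrix.vandermonde v).det := by
  have h : (Matrix.of fun i j => a i * b j * v i ^ (j : ℕ)) =
      Matrix.of fun i j => a i * (Matrix.of fun i j => b j * Matrix.vandermonde v i j) i j := by
    ext i j
    simp only [Matrix.of_apply, Matrix.vandermonde_apply, mul_assoc]
  rw [h, Matrix.det_mul_column, Matrix.det_mul_row, mul_assoc]

theorem Fin.prod_prod_Ioi_eq_prod_range_prod_range {M : Type*} [CommMonoid M] (n : ℕ)
    (f : ℕ → ℕ → M) :
    ∏ i : Fin n, ∏ j ∈ Ioi i, f i j = ∏ j ∈ range n, ∏ i ∈ range j, f i j := by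
  rw [Finset.prod_comm' (t' := univ) (s' := fun j => Iio j) (by simp),
    ← Fin.prod_univ_eq_prod_range]
  refine prod_congr rfl fun j _ => ?_
  rw [← Nat.Iio_eq_range, ← Fin.map_valEmbedding_Iio, prod_map]
  rfl

theorem inv_pow_add_sub_inv_pow {K : Type*} [Field K] {q : K} (hq : q ≠ 0) (m k : ℕ) :
    q⁻¹ ^ (m + k) - q⁻¹ ^ m = q⁻¹ ^ (m + k) * (1 - q ^ k) := by
  rw [mul_sub, mul_one, pow_add, mul_assoc, ← mul_pow, inv_mul_cancel₀ hq, one_pow, mul_one]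

theorem prod_range_inv_pow_sub {K : Type*} [Field K] {q : K} (hq : q ≠ 0) (j : ℕ) :
    ∏ i ∈ range j, (q⁻¹ ^ j - q⁻¹ ^ i) = q⁻¹ ^ (j ^ 2) * ∏ k ∈ range j, (1 - q ^ (k + 1)) := by
  calc ∏ i ∈ range j, (q⁻¹ ^ j - q⁻¹ ^ i)
      = ∏ k ∈ range j, q⁻¹ ^ j * (1 - q ^ (k + 1)) := by
        rw [← prod_range_reflect]
        refine prod_congr rfl fun k hk => ?_
        have hj : j - 1 - k + (k + 1) = j := by rw [mem_range] at hk; omega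
        simpa only [hj] using inv_pow_add_sub_inv_pow hq (j - 1 - k) (k + 1)
    _ = q⁻¹ ^ (j ^ 2) * ∏ k ∈ range j, (1 - q ^ (k + 1)) := by
        rw [prod_mul_distrib, prod_const, card_range, ← pow_mul, sq]

theorem Matrix.det_vandermonde_inv_pow {K : Type*} [Field K] {q : K} (hq : q ≠ 0) (n : ℕ) :
    (Matrix.vandermonde fun i : Fin n => q⁻¹ ^ (i : ℕ)).det =
      q⁻¹ ^ (∑ j ∈ range n, j ^ 2) * ∏ j ∈ range n, ∏ k ∈ range j, (1 - q ^ (k + 1)) := by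
  rw [Matrix.det_vandermonde,
    Fin.prod_prod_Ioi_eq_prod_range_prod_range n fun i j => q⁻¹ ^ j - q⁻¹ ^ i,
    prod_congr rfl fun j _ => prod_range_inv_pow_sub hq j, prod_mul_distrib, prod_pow_eq_pow_sum]

theorem stieltjes_wigert_moment_factor {q : ℝ} (hq : 0 < q) (i j : ℕ) :
    q ^ (-((((i + j : ℕ) : ℝ) + 1) ^ 2 / 2)) =
      q ^ (-(((i : ℝ) + 1) ^ 2 / 2)) * q ^ (-((j : ℝ) * ((j : ℝ) + 2) / 2)) * (q⁻¹ ^ i) ^ j := by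
  rw [← pow_mul, inv_pow, ← Real.rpow_natCast q (i * j), ← Real.rpow_neg hq.le,
    ← Real.rpow_add hq, ← Real.rpow_add hq]
  congr 1
  push_cast
  ring

theorem stieltjes_wigert_exponent_sum (n : ℕ) :
    ∑ i ∈ range (n + 1), (-(((i : ℝ) + 1) ^ 2 / 2) + -((i : ℝ) * ((i : ℝ) + 2) / 2) + -(i : ℝ) ^ 2) =
      -(((n : ℝ) + 1) * ((n : ℝ) + 2) * (2 * (n : ℝ) + 3) / 6) -
        (n : ℝ) * ((n : ℝ) + 1) * (2 * (n : ℝ) + 1) / 6 + ((n : ℝ) + 1) / 2 := by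
  induction n with
  | zero => norm_num
  | succ n ih => rw [sum_range_succ, ih]; push_cast; ring

theorem stieltjes_wigert_hankel_det_general
    (q : ℝ) (hq : 0 < q) (n : ℕ)
    (s : ℕ → ℝ) (hs : ∀ m : ℕ, s m = q ^ (-(((m : ℝ) + 1) ^ 2 / 2)))
    (H : Matrix (Fin (n + 1)) (Fin (n + 1)) ℝ)
    (hH : ∀ i j, H i j = s ((i : ℕ) + (j : ℕ)))
    (S : ℕ → ℝ) (hS : ∀ m : ℕ, S m = (m : ℝ) * ((m : ℝ) + 1) * (2 * (m : ℝ) + 1) / 6) :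
    H.det = q ^ (-(S (n + 1)) - S n + ((n : ℝ) + 1) / 2) *
      ∏ j ∈ Finset.Icc 1 n, ∏ k ∈ Finset.range j, (1 - q ^ (k + 1)) := by
  have hfactor : H = Matrix.of fun i j : Fin (n + 1) => q ^ (-((((i : ℕ) : ℝ) + 1) ^ 2 / 2)) *
      q ^ (-(((j : ℕ) : ℝ) * (((j : ℕ) : ℝ) + 2) / 2)) * (q⁻¹ ^ (i : ℕ)) ^ (j : ℕ) := by
    ext i j
    rw [hH, hs, Matrix.of_apply, ← stieltjes_wigert_moment_factor hq, Nat.cast_add]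
  have hpochhammer : ∏ j ∈ range (n + 1), ∏ k ∈ range j, (1 - q ^ (k + 1)) =
      ∏ j ∈ Icc 1 n, ∏ k ∈ range j, (1 - q ^ (k + 1)) := by
    rw [← Nat.Ico_zero_eq_range, prod_eq_prod_Ico_succ_bot n.add_one_pos, prod_range_zero,
      one_mul, zero_add, Ico_add_one_right_eq_Icc]
  have hpower : q⁻¹ ^ (∑ j ∈ range (n + 1), j ^ 2) = q ^ (∑ j ∈ range (n + 1), -((j : ℝ) ^ 2)) := by
    rw [← Real.rpow_natCast, Real.inv_rpow hq.le, ← Real.rpow_neg hq.le, sum_neg_distrib]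
    push_cast
    rfl
  rw [hfactor, Matrix.det_of_mul_mul_pow, Matrix.det_vandermonde_inv_pow hq.ne', hpochhammer,
    hpower, ← mul_assoc, ← Real.rpow_sum_of_pos hq, ← Real.rpow_sum_of_pos hq,
    Fin.sum_univ_eq_sum_range (fun i => -(((i : ℝ) + 1) ^ 2 / 2)),
    Fin.sum_univ_eq_sum_range (fun i => -((i : ℝ) * ((i : ℝ) + 2) / 2)),
    ← Real.rpow_add hq, ← Real.rpow_add hq, ← sum_add_distrib, ← sum_add_distrib,
    stieltjes_wigert_exponent_sum, hS, hS]
  congr 2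
  push_cast
  ring

/-- Determinant of the Stieltjes–Wigert Hankel matrix:
`D_n = q^{-S_{n+1} - S_n + (n+1)/2} ∏_{j=1}^n (q;q)_j` with `S_m = m(m+1)(2m+1)/6`. -/
theorem stieltjes_wigert_hankel_det
    (q : ℝ) (hq : 0 < q) (hq1 : q < 1) (n : ℕ)
    (s : ℕ → ℝ) (hs : ∀ m : ℕ, s m = q ^ (-(((m : ℝ) + 1) ^ 2 / 2)))
    (H : Matrix (Fin (n + 1)) (Fin (n + 1)) ℝ)
    (hH : ∀ i j, H i j = s ((i : ℕ) + (j : ℕ)))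
    (S : ℕ → ℝ) (hS : ∀ m : ℕ, S m = (m : ℝ) * ((m : ℝ) + 1) * (2 * (m : ℝ) + 1) / 6) :
    H.det = q ^ (-(S (n + 1)) - S n + ((n : ℝ) + 1) / 2) *
      ∏ j ∈ Finset.Icc 1 n, ∏ k ∈ Finset.range j, (1 - q ^ (k + 1)) :=
  stieltjes_wigert_hankel_det_general q hq n s hs H hH S hS
end
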